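/- arXiv:1507.02799 — 2 statements merged into one kernel-verified Lean document; each statement's English description precedes it below -/
import Mathlib

section
/- Let F be a fixed optimal shadows-minimal cover of T with the maximum number of twin links. Consider a locked leaf a, its locking link bb', and its locking tree T_v, and suppose ax ∈ F for some node x ∉ {b, b'}. Then x is a proper ancestor of the least common ancestor u of a, b, b', the link bb' belongs to F, and there is a link xz ∈ F such that z ∉ T_v and z is not a locked leaf. -/
open scoped Classical

namespace TAP

/-- A rooted tree on vertex set `V`, given by a parent function. -/
structure Tree (V : Type) where
  root : V
  parent : V → V
  parent_root : parent root = root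
  reach : ∀ v, ∃ n, parent^[n] v = root

namespace Tree

variable {V : Type} (t : Tree V)

/-- `t.desc w v` : `v` lies in the rooted subtree `T_w`, i.e. `w` is an ancestor of `v` or `w = v`. -/
def desc (w v : V) : Prop := ∃ n, t.parent^[n] v = w

/-- The depth of a node (its distance to the root). -/
noncomputable def depth (v : V) : ℕ :=
  @Nat.find (fun n => t.parent^[n] v = t.root) (Classical.decPred _) (t.reach v)

/-- `v` is a leaf of the tree: it is not the root and it has no children. -/
def IsLeaf (v : V) : Prop := v ≠ t.root ∧ ∀ u, u ≠ v → t.parent u ≠ v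

/-- The tree edge `(w, parent w)` (for `w ≠ root`) lies on the tree path `P(u,v)`. -/
def onPath (w u v : V) : Prop :=
  (t.desc w u ∧ ¬ t.desc w v) ∨ (t.desc w v ∧ ¬ t.desc w u)

/-- The node `c` lies on the tree path `P(u,v)`. -/
def onPathNode (c u v : V) : Prop :=
  (t.desc c u ∨ t.desc c v) ∧ ∀ w, t.desc w u → t.desc w v → t.desc w c

/-- `u` is the least common ancestor of `a` and `b`. -/
def IsLCA (u a b : V) : Prop :=
  t.desc u a ∧ t.desc u b ∧ ∀ w, t.desc w a → t.desc w b → t.desc w u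

end Tree

variable {V : Type} [Fintype V] [DecidableEq V]

/-- The link `e` covers the tree edge `(w, parent w)`. -/
def covers (t : Tree V) (e : Sym2 V) (w : V) : Prop :=
  ∃ u v, e = s(u, v) ∧ t.onPath w u v

/-- Some link of `F` covers the tree edge `(w, parent w)`. -/
def coveredBy (t : Tree V) (F : Finset (Sym2 V)) (w : V) : Prop :=
  ∃ e ∈ F, covers t e w

/-- `F` covers the tree: every tree edge is covered by some link of `F`
(equivalently, `T ∪ F` is 2-edge-connected). -/
def IsCover (t : Tree V) (F : Finset (Sym2 V)) : Prop :=
  ∀ w, w ≠ t.root → coveredBy t F w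

/-- `e'` is a shadow of `e`, i.e. `P(e') ⊆ P(e)`. -/
def Shadow (t : Tree V) (e' e : Sym2 V) : Prop := ∀ w, covers t e' w → covers t e w

/-- `e'` is a proper shadow of `e`. -/
def ProperShadow (t : Tree V) (e' e : Sym2 V) : Prop :=
  Shadow t e' e ∧ ∃ w, covers t e w ∧ ¬ covers t e' w

/-- The link set `E` is closed under shadows. -/
def ShadowClosed (t : Tree V) (E : Finset (Sym2 V)) : Prop :=
  ∀ e ∈ E, ∀ e' : Sym2 V, ¬ e'.IsDiag → Shadow t e' e → e' ∈ E

/-- `F` is an (inclusion-minimal) shadows-minimal cover: replacing any link of `F` by a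
proper shadow of it destroys the covering property. -/
def ShadowsMinimal (t : Tree V) (F : Finset (Sym2 V)) : Prop :=
  IsCover t F ∧ (∀ e ∈ F, ¬ IsCover t (F.erase e)) ∧
  ∀ e ∈ F, ∀ e' : Sym2 V, ProperShadow t e' e → ¬ IsCover t (insert e' (F.erase e))

/-- `deg Y x` : the number of links of `Y` incident to `x`. -/
noncomputable def deg (Y : Finset (Sym2 V)) (x : V) : ℕ := (Y.filter (fun e => x ∈ e)).card

/-! ### Contraction of a set of links -/

/-- `u` and `v` lie in the same 2-edge-connected component of `T ∪ I`,
i.e. they get identified in `T/I`. -/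
def rel (t : Tree V) (I : Finset (Sym2 V)) (u v : V) : Prop :=
  ∀ w, w ≠ t.root → t.onPath w u v → coveredBy t I w

def relSetoid (t : Tree V) (I : Finset (Sym2 V)) : Setoid V where
  r := rel t I
  iseqv := by
    refine ⟨?_, ?_, ?_⟩
    · intro u w _ hp
      rcases hp with ⟨h1, h2⟩ | ⟨h1, h2⟩ <;> exact absurd h1 h2
    · intro u v h w hw hp
      refine h w hw ?_
      rcases hp with ⟨h1, h2⟩ | ⟨h1, h2⟩
      · exact Or.inr ⟨h1, h2⟩
      · exact Or.inl ⟨h1, h2⟩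
    · intro u v x h1 h2 w hw hp
      by_cases hv : t.desc w v
      · rcases hp with ⟨ha, hb⟩ | ⟨ha, hb⟩
        · exact h2 w hw (Or.inl ⟨hv, hb⟩)
        · exact h1 w hw (Or.inr ⟨hv, hb⟩)
      · rcases hp with ⟨ha, hb⟩ | ⟨ha, hb⟩
        · exact h1 w hw (Or.inl ⟨ha, hv⟩)
        · exact h2 w hw (Or.inr ⟨ha, hv⟩)

/-- The node set of the contracted tree `T/I`. -/
abbrev QT (t : Tree V) (I : Finset (Sym2 V)) : Type := Quotient (relSetoid t I)

noncomputable instance instFintypeQT (t : Tree V) (I : Finset (Sym2 V)) : Fintype (QT t I) :=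
  @Quotient.fintype V _ (relSetoid t I) (Classical.decRel _)

/-- The node of `T/I` corresponding to the node `x` of `T`. -/
def qm (t : Tree V) (I : Finset (Sym2 V)) (x : V) : QT t I := Quotient.mk (relSetoid t I) x

/-- The class of `u` is a (possibly compound) leaf of `T/I`. -/
def qleafRep (t : Tree V) (I : Finset (Sym2 V)) (u : V) : Prop :=
  ¬ rel t I u t.root ∧ ∀ v, rel t I (t.parent v) u → rel t I v u

/-- The class of `u` lies in the rooted subtree of `T/I` rooted at the class of `v`. -/
def qdescRep (t : Tree V) (I : Finset (Sym2 V)) (v u : V) : Prop :=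
  ∃ w, t.desc w u ∧ rel t I w v

/-- The class of `u` is a compound node of `T/I` (a contracted component, or the root). -/
def qcompoundRep (t : Tree V) (I : Finset (Sym2 V)) (u : V) : Prop :=
  (∃ w, w ≠ u ∧ rel t I u w) ∨ rel t I u t.root

/-- The node `x` of `T` lies in the rooted subtree of `T/I` whose root is the class `c`. -/
def inT (t : Tree V) (I : Finset (Sym2 V)) (c : QT t I) (x : V) : Prop :=
  qdescRep t I c.out x

/-- The node `d` of `T/I` lies in the rooted subtree of `T/I` whose root is `c`. -/
def below (t : Tree V) (I : Finset (Sym2 V)) (c d : QT t I) : Prop := inT t I c d.out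

/-- The class of `x` is matched by the matching `M`. -/
def matchedRep (t : Tree V) (I M : Finset (Sym2 V)) (x : V) : Prop :=
  ∃ e ∈ M, ∃ z, z ∈ e ∧ rel t I z x

/-- The class of `x` lies on the path of `T/I` between the classes of `u` and of `v`. -/
def qOnPathNode (t : Tree V) (I : Finset (Sym2 V)) (x u v : V) : Prop :=
  (qdescRep t I x u ∨ qdescRep t I x v) ∧
  ∀ w, qdescRep t I w u → qdescRep t I w v → qdescRep t I w x

/-- The class of `x` is the least common ancestor in `T/I` of the classes of `a` and `b`. -/
def qIsLCA (t : Tree V) (I : Finset (Sym2 V)) (x a b : V) : Prop :=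
  qdescRep t I x a ∧ qdescRep t I x b ∧
  ∀ w, qdescRep t I w a → qdescRep t I w b → qdescRep t I w x

/-- Depth of the class of `x` in `T/I`. -/
noncomputable def qdepth (t : Tree V) (I : Finset (Sym2 V)) (x : V) : ℕ :=
  (Finset.univ.filter (fun w => w ≠ t.root ∧ ¬ coveredBy t I w ∧ t.desc w x)).card

/-- `u` is an up-node of (the class of) `a` in `T/I` : among all links of `E` leaving the
class of `a`, some link from the class of `a` to `u` has its other end as close as possible
to the root. -/
def qUpNode (t : Tree V) (I E : Finset (Sym2 V)) (a u : V) : Prop :=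
  (∃ b, rel t I b a ∧ s(b, u) ∈ E) ∧ ¬ rel t I u a ∧
  ∀ b x, rel t I b a → s(b, x) ∈ E → ¬ rel t I x a → qdepth t I u ≤ qdepth t I x

/-- `s(a,b)` is a twin link of `T/I` : a link of `E` between two distinct leaves of `T/I`
whose contraction results in a new leaf. -/
def qTwinAt (t : Tree V) (I E : Finset (Sym2 V)) (a b : V) : Prop :=
  qleafRep t I a ∧ qleafRep t I b ∧ ¬ rel t I a b ∧ s(a, b) ∈ E ∧
  qleafRep t (insert (s(a, b)) I) a

/-- The class of `x` is a stem of `T/I` : the least common ancestor of the two ends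
of a twin link. -/
def qStem (t : Tree V) (I E : Finset (Sym2 V)) (x : V) : Prop :=
  ∃ a b, qTwinAt t I E a b ∧ qIsLCA t I x a b

/-! ### Twin links, stems, up-links and locked leaves in the original tree -/

/-- `a` and `b` are twins: two leaves such that the contraction of the link `ab`
results in a new leaf. -/
def TwinPair (t : Tree V) (a b : V) : Prop :=
  t.IsLeaf a ∧ t.IsLeaf b ∧ a ≠ b ∧ qleafRep t {s(a, b)} a

/-- `e` is a twin link. -/
def IsTwinLinkE (t : Tree V) (e : Sym2 V) : Prop := ∃ a b, e = s(a, b) ∧ TwinPair t a b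

/-- `x` is a stem: the least common ancestor of two twins. -/
def IsStem (t : Tree V) (E : Finset (Sym2 V)) (x : V) : Prop :=
  ∃ a b, TwinPair t a b ∧ s(a, b) ∈ E ∧ t.IsLCA x a b

noncomputable def stems (t : Tree V) (E : Finset (Sym2 V)) : Finset V :=
  Finset.univ.filter (IsStem t E)

/-- `X = V \ (L ∪ S)`. -/
noncomputable def Xset (t : Tree V) (E : Finset (Sym2 V)) : Finset V :=
  Finset.univ.filter (fun x => ¬ t.IsLeaf x ∧ ¬ IsStem t E x)

/-- `s(a,u)` is the up-link of `a` : among all links of `E` at `a`, its other end `u` is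
as close as possible to the root (`u` is the up-node of `a`). -/
def IsUpLink (t : Tree V) (E : Finset (Sym2 V)) (a u : V) : Prop :=
  s(a, u) ∈ E ∧ ∀ x, s(a, x) ∈ E → t.depth u ≤ t.depth x

/-- The rooted subtree `T_v` is `a`-closed: it contains the up-node of `a`. -/
def AClosed (t : Tree V) (E : Finset (Sym2 V)) (v a : V) : Prop :=
  ∀ u, IsUpLink t E a u → t.desc v u

/-- The rooted proper subtree `T_v` witnesses that the leaf `a` is locked by the link `bb'` :
`L(T_v) = {a,b,b'}`, `ab` is a twin link and `T_v` is `a`-closed. -/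
def LocksAt (t : Tree V) (E : Finset (Sym2 V)) (b b' a v : V) : Prop :=
  v ≠ t.root ∧ s(b, b') ∈ E ∧ b ≠ b' ∧ b' ≠ a ∧
  {x | t.IsLeaf x ∧ t.desc v x} = {a, b, b'} ∧
  TwinPair t a b ∧ s(a, b) ∈ E ∧ AClosed t E v a

/-- The leaf `a` is locked by the link `bb'`. -/
def Locks (t : Tree V) (E : Finset (Sym2 V)) (b b' a : V) : Prop :=
  ∃ v, LocksAt t E b b' a v

def IsLockedLeaf (t : Tree V) (E : Finset (Sym2 V)) (a : V) : Prop :=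
  ∃ b b', Locks t E b b' a

def IsLockingLink (t : Tree V) (E : Finset (Sym2 V)) (e : Sym2 V) : Prop :=
  ∃ b b' a, e = s(b, b') ∧ Locks t E b b' a

/-- `T_v` is the locking tree of `a` (with locking link `bb'`): the minimal rooted subtree
witnessing the lock. -/
def IsLockingTree (t : Tree V) (E : Finset (Sym2 V)) (a b b' v : V) : Prop :=
  LocksAt t E b b' a v ∧ ∀ v', LocksAt t E b b' a v' → t.desc v' v

/-! ### The fixed optimal cover `F` -/

noncomputable def twinCount (t : Tree V) (F : Finset (Sym2 V)) : ℕ :=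
  (F.filter (fun e => IsTwinLinkE t e)).card

/-- `F` is an optimal (minimum-size) shadows-minimal cover of `T` with the maximum
number of twin links. -/
def IsGoodCover (t : Tree V) (E F : Finset (Sym2 V)) : Prop :=
  F ⊆ E ∧ ShadowsMinimal t F ∧
  (∀ F' : Finset (Sym2 V), F' ⊆ E → IsCover t F' → F.card ≤ F'.card) ∧
  (∀ F' : Finset (Sym2 V), F' ⊆ E → ShadowsMinimal t F' → F'.card = F.card →
    twinCount t F' ≤ twinCount t F)

/-! ### Matchings and the lower bound -/

def IsMatching (M : Finset (Sym2 V)) : Prop :=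
  (∀ e ∈ M, ¬ e.IsDiag) ∧ ∀ e ∈ M, ∀ f ∈ M, e ≠ f → ∀ x, x ∈ e → x ∉ f

/-- `E(L,L)` : the links of `E` joining two leaves. -/
noncomputable def leafLinks (t : Tree V) (E : Finset (Sym2 V)) : Finset (Sym2 V) :=
  E.filter (fun e => ∀ x ∈ e, t.IsLeaf x)

/-- `W` : the set of twin links and locking links. -/
noncomputable def Wlinks (t : Tree V) (E : Finset (Sym2 V)) : Finset (Sym2 V) :=
  E.filter (fun e => IsTwinLinkE t e ∨ IsLockingLink t E e)

/-- `M` is a maximum matching in `E(L,L) \ W`. -/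
def IsMaxLeafMatching (t : Tree V) (E M : Finset (Sym2 V)) : Prop :=
  M ⊆ leafLinks t E \ Wlinks t E ∧ IsMatching M ∧
  ∀ M' : Finset (Sym2 V), M' ⊆ leafLinks t E \ Wlinks t E → IsMatching M' → M'.card ≤ M.card

/-- `U` : the set of leaves unmatched by `M`. -/
noncomputable def unmatchedLeaves (t : Tree V) (M : Finset (Sym2 V)) : Finset V :=
  Finset.univ.filter (fun a => t.IsLeaf a ∧ ∀ e ∈ M, a ∉ e)

/-- `M_F = F(L,L) \ W`. -/
noncomputable def MFlinks (t : Tree V) (E F : Finset (Sym2 V)) : Finset (Sym2 V) :=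
  (F.filter (fun e => ∀ x ∈ e, t.IsLeaf x)) \ Wlinks t E

/-- `N = {bb' ∈ M : each of b, b' is unmatched by M_F}`. -/
noncomputable def Nlinks (t : Tree V) (E F M : Finset (Sym2 V)) : Finset (Sym2 V) :=
  M.filter (fun e => ∀ b ∈ e, ∀ f ∈ MFlinks t E F, b ∉ f)

/-- `J` : the set of links of `F` not incident to a locked leaf. -/
noncomputable def Jlinks (t : Tree V) (E F : Finset (Sym2 V)) : Finset (Sym2 V) :=
  F.filter (fun e => ∀ x ∈ e, ¬ IsLockedLeaf t E x)

/-- The lower bound `(3/2)|M| + |U| + (1/2)|N| + (1/2) Σ_{x ∈ X} d_J(x)`. -/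
noncomputable def LB (t : Tree V) (E F M : Finset (Sym2 V)) : ℚ :=
  (3 / 2 : ℚ) * (M.card : ℚ) + ((unmatchedLeaves t M).card : ℚ)
    + (1 / 2 : ℚ) * ((Nlinks t E F M).card : ℚ)
    + (1 / 2 : ℚ) * ∑ x ∈ Xset t E, (deg (Jlinks t E F) x : ℚ)

/-! ### Subtrees of `T/I`, semi-closed trees, credits -/

/-- `T'` (the rooted subtree of `T/I` with root `c`) is `M`-compatible. -/
def MCompatible (t : Tree V) (I M : Finset (Sym2 V)) (c : QT t I) : Prop :=
  ∀ e ∈ M, (∀ x ∈ e, inT t I c x) ∨ (∀ x ∈ e, ¬ inT t I c x)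

/-- `T'` is semi-closed (w.r.t. `M`): `M`-compatible and closed w.r.t. its unmatched leaves. -/
def SemiClosedQ (t : Tree V) (I E M : Finset (Sym2 V)) (c : QT t I) : Prop :=
  MCompatible t I M c ∧
  ∀ x y, s(x, y) ∈ E → inT t I c x → qleafRep t I x → ¬ matchedRep t I M x → inT t I c y

/-- `T'` is minimally semi-closed. -/
def MinSemiClosedQ (t : Tree V) (I E M : Finset (Sym2 V)) (c : QT t I) : Prop :=
  SemiClosedQ t I E M c ∧
  ∀ c' : QT t I, below t I c c' → c' ≠ c → ¬ SemiClosedQ t I E M c'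

/-- `I'` is an exact cover of `T'` : the set of edges of `T/I` covered by `I'` is exactly
the edge set of `T'`. -/
def IsExactCoverQ (t : Tree V) (I : Finset (Sym2 V)) (c : QT t I) (I' : Finset (Sym2 V)) : Prop :=
  ∀ w, w ≠ t.root → ¬ coveredBy t I w → (coveredBy t I' w ↔ inT t I c (t.parent w))

/-- `up(U')` : the set of up-links of the unmatched leaves of `T'`. -/
noncomputable def upOfQ (t : Tree V) (I E M : Finset (Sym2 V)) (c : QT t I) :
    Finset (Sym2 V) :=
  E.filter (fun e => ∃ a u, e = s(a, u) ∧ inT t I c a ∧ qleafRep t I a ∧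
    ¬ matchedRep t I M a ∧ qUpNode t I E a u)

/-- `M` is a matching on the leaves of `T/I`. -/
def IsLeafMatchingQ (t : Tree V) (I M : Finset (Sym2 V)) : Prop :=
  (∀ e ∈ M, ∃ a b, e = s(a, b) ∧ qleafRep t I a ∧ qleafRep t I b ∧ ¬ rel t I a b) ∧
  ∀ e ∈ M, ∀ f ∈ M, e ≠ f → ∀ x, x ∈ e → ∀ y, y ∈ f → ¬ rel t I x y

/-- `L' = L(T')` as a set of nodes of `T/I`. -/
noncomputable def LsetQ (t : Tree V) (I : Finset (Sym2 V)) (c : QT t I) : Finset (QT t I) :=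
  Finset.univ.filter (fun d => below t I c d ∧ qleafRep t I d.out)

/-- `U'` : the `M`-unmatched leaves of `T'`. -/
noncomputable def UsetQ (t : Tree V) (I M : Finset (Sym2 V)) (c : QT t I) : Finset (QT t I) :=
  Finset.univ.filter
    (fun d => below t I c d ∧ qleafRep t I d.out ∧ ¬ matchedRep t I M d.out)

/-- `C'` : the non-leaf compound nodes of `T'`. -/
noncomputable def CsetQ (t : Tree V) (I : Finset (Sym2 V)) (c : QT t I) : Finset (QT t I) :=
  Finset.univ.filter
    (fun d => below t I c d ∧ qcompoundRep t I d.out ∧ ¬ qleafRep t I d.out)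

/-- `M' = M(T')` : the links of `M` with both ends in `T'`. -/
noncomputable def MlinksQ (t : Tree V) (I M : Finset (Sym2 V)) (c : QT t I) :
    Finset (Sym2 V) :=
  M.filter (fun e => ∀ x ∈ e, inT t I c x)

/-- `S'` : the stems of `T'`. -/
noncomputable def SsetQ (t : Tree V) (I E : Finset (Sym2 V)) (c : QT t I) : Finset (QT t I) :=
  Finset.univ.filter (fun d => below t I c d ∧ qStem t I E d.out)

/-- `S'_1` : the stems of `T'` whose twin link lies in `F`. -/
noncomputable def S1setQ (t : Tree V) (I E F : Finset (Sym2 V)) (c : QT t I) :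
    Finset (QT t I) :=
  Finset.univ.filter (fun d => below t I c d ∧
    ∃ a b, qTwinAt t I E a b ∧ s(a, b) ∈ F ∧ qIsLCA t I d.out a b)

/-- `X'` : the original nodes of `T'` lying in `X`. -/
noncomputable def XsetQ (t : Tree V) (I E : Finset (Sym2 V)) (c : QT t I) : Finset (QT t I) :=
  Finset.univ.filter
    (fun d => below t I c d ∧ ¬ qcompoundRep t I d.out ∧ d.out ∈ Xset t E)

/-- `tickets(T') = |N(T')| + Σ_{x ∈ X'} d_J(x)`. -/
noncomputable def ticketsQ (t : Tree V) (I E F M : Finset (Sym2 V)) (c : QT t I) : ℕ :=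
  ((Nlinks t E F M).filter (fun e => ∀ x ∈ e, inT t I c x)).card
    + ∑ d ∈ XsetQ t I E c, deg (Jlinks t E F) d.out

/-- `coupons(T')` : one coupon for each unmatched leaf and each compound node of `T'`,
and `3/2` coupons for each link of `M(T')`. -/
noncomputable def couponsQ (t : Tree V) (I M : Finset (Sym2 V)) (c : QT t I) : ℚ :=
  ((Finset.univ.filter (fun d : QT t I => below t I c d ∧
      ((qleafRep t I d.out ∧ ¬ matchedRep t I M d.out) ∨ qcompoundRep t I d.out))).card : ℚ)
    + (3 / 2 : ℚ) * ((MlinksQ t I M c).card : ℚ)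

/-- `credit(T') = coupons(T') + tickets(T')/2`. -/
noncomputable def creditQ (t : Tree V) (I E F M : Finset (Sym2 V)) (c : QT t I) : ℚ :=
  couponsQ t I M c + (ticketsQ t I E F M c : ℚ) / 2

/-- `T'` is deficient: `credit(T') < |U'| + |M'| + 1`. -/
def DeficientQ (t : Tree V) (I E F M : Finset (Sym2 V)) (c : QT t I) : Prop :=
  creditQ t I E F M c < ((UsetQ t I M c).card : ℚ) + ((MlinksQ t I M c).card : ℚ) + 1

/-! ### Invariants and greedy steps -/

/-- Credit Invariant: the credit of every subtree of `T/I` is distributed as described: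
coupons on unmatched leaves, compound nodes and links of `M`, tickets on links of `N` and
original nodes of `X`. -/
def CreditInvariant (t : Tree V) (E F M I : Finset (Sym2 V)) : Prop :=
  F ⊆ E ∧ M ⊆ E ∧
  ∀ c : QT t I, creditQ t I E F M c = couponsQ t I M c + (ticketsQ t I E F M c : ℚ) / 2

/-- Degree in `T/I` : the number of links of `F` with exactly one end in the class of `x`. -/
noncomputable def qdegQ (t : Tree V) (I F : Finset (Sym2 V)) (x : V) : ℕ :=
  (F.filter (fun e => (∃ z, z ∈ e ∧ rel t I z x) ∧ ∃ z, z ∈ e ∧ ¬ rel t I z x)).card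

/-- Matching Invariant: `M` is a matching on the leaves of `T/I` and `d_F(b) = 1` for
every leaf `b` of `T/I` matched by `M`. -/
def MatchingInvariant (t : Tree V) (F M I : Finset (Sym2 V)) : Prop :=
  IsLeafMatchingQ t I M ∧ ∀ e ∈ M, ∀ b, b ∈ e → qdegQ t I F b = 1

/-- A greedy locking-tree contraction step. -/
def LockStep (t : Tree V) (E M : Finset (Sym2 V)) (I I₂ : Finset (Sym2 V)) : Prop :=
  ∃ a b b' v u,
    IsLockingTree t E a b b' v ∧
    (∀ e ∈ M, a ∉ e) ∧ (∀ e ∈ M, b ∉ e) ∧ (∀ e ∈ M, b' ∉ e) ∧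
    (∀ c c' v', IsLockingTree t E b c c' v' → t.desc v v') ∧
    IsUpLink t E a u ∧ I₂ = I ∪ {s(b, b'), s(a, u)}

/-- A greedy link contraction step: contract a link of `E` joining two `M`-unmatched
leaves of `T/I`. -/
def LinkStep (t : Tree V) (E M : Finset (Sym2 V)) (I I₂ : Finset (Sym2 V)) : Prop :=
  ∃ x y, s(x, y) ∈ E ∧ ¬ rel t I x y ∧ qleafRep t I x ∧ qleafRep t I y ∧
    ¬ matchedRep t I M x ∧ ¬ matchedRep t I M y ∧ I₂ = insert (s(x, y)) I

/-- Contraction of a semi-closed tree with an exact cover. -/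
def SemiStep (t : Tree V) (E M : Finset (Sym2 V)) (I I₂ : Finset (Sym2 V)) : Prop :=
  ∃ (c : QT t I) (I' : Finset (Sym2 V)), I' ⊆ E ∧ SemiClosedQ t I E M c ∧
    IsExactCoverQ t I c I' ∧ I₂ = I ∪ I'

/-- A sequence of greedy locking-tree contractions starting from the empty partial solution. -/
inductive LockPhase {V : Type} [Fintype V] [DecidableEq V]
    (t : Tree V) (E M : Finset (Sym2 V)) : Finset (Sym2 V) → Prop where
  | base : LockPhase t E M ∅
  | step {I I₂ : Finset (Sym2 V)} :
      LockPhase t E M I → LockStep t E M I I₂ → LockPhase t E M I₂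

/-- Partial Solution Invariant: `I` is obtained by first exhausting greedy locking-tree
contractions, and then sequentially applying greedy link contractions or contractions of
semi-closed trees with exact covers. -/
inductive PSI {V : Type} [Fintype V] [DecidableEq V]
    (t : Tree V) (E M : Finset (Sym2 V)) : Finset (Sym2 V) → Prop where
  | start {I : Finset (Sym2 V)} :
      LockPhase t E M I → (∀ I₂, ¬ LockStep t E M I I₂) → PSI t E M I
  | link {I I₂ : Finset (Sym2 V)} : PSI t E M I → LinkStep t E M I I₂ → PSI t E M I₂
  | semi {I I₂ : Finset (Sym2 V)} : PSI t E M I → SemiStep t E M I I₂ → PSI t E M I₂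

/-! ### Dangerous trees -/

/-- The witness structure of a 3-leaf dangerous tree: `a` is the unmatched leaf,
`b, b'` are the matched leaves, `ab' ∈ E`, the contraction of `ab'` does not create a new
leaf, and `T'` is `b`-open. -/
def Witness3 (t : Tree V) (I E M : Finset (Sym2 V)) (c : QT t I) (a b b' : V) : Prop :=
  inT t I c a ∧ inT t I c b ∧ inT t I c b' ∧
  qleafRep t I a ∧ qleafRep t I b ∧ qleafRep t I b' ∧
  ¬ rel t I a b ∧ ¬ rel t I a b' ∧ ¬ rel t I b b' ∧
  ¬ matchedRep t I M a ∧ matchedRep t I M b ∧ matchedRep t I M b' ∧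
  (∃ x y, s(x, y) ∈ E ∧ rel t I x a ∧ rel t I y b' ∧
    ¬ qleafRep t (insert (s(x, y)) I) x) ∧
  (∃ u, qUpNode t I E b u ∧ ¬ inT t I c u)

/-- A 3-leaf dangerous tree. -/
def Dangerous3 (t : Tree V) (I E M : Finset (Sym2 V)) (c : QT t I) : Prop :=
  SemiClosedQ t I E M c ∧ (CsetQ t I c).card = 0 ∧ (MlinksQ t I M c).card = 1 ∧
  (LsetQ t I c).card = 3 ∧ (SsetQ t I E c).card = 0 ∧
  ∃ a b b', Witness3 t I E M c a b b'

/-- A dangerous tree: a 3-leaf dangerous tree, or a 4-leaf tree with one stem, exactly one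
twin of which is matched, such that contracting the twin link yields a 3-leaf dangerous tree. -/
def Dangerous (t : Tree V) (I E M : Finset (Sym2 V)) (c : QT t I) : Prop :=
  Dangerous3 t I E M c ∨
  (SemiClosedQ t I E M c ∧ (CsetQ t I c).card = 0 ∧ (MlinksQ t I M c).card = 1 ∧
    (LsetQ t I c).card = 4 ∧ (SsetQ t I E c).card = 1 ∧
    ∃ a b, qTwinAt t I E a b ∧ inT t I c a ∧ inT t I c b ∧
      (matchedRep t I M a ↔ ¬ matchedRep t I M b) ∧
      Dangerous3 t (insert (s(a, b)) I) E M (qm t (insert (s(a, b)) I) c.out))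

/-! ### The switching construction -/

/-- `W̃` : for every 4-leaf minimally semi-closed (dangerous) tree of `T/I`, its twin link. -/
noncomputable def Wtil (t : Tree V) (I E M : Finset (Sym2 V)) : Finset (Sym2 V) :=
  E.filter (fun e => ∃ (a b : V) (c : QT t I), e = s(a, b) ∧ MinSemiClosedQ t I E M c ∧
    (LsetQ t I c).card = 4 ∧ qTwinAt t I E a b ∧ inT t I c a ∧ inT t I c b)

/-- The canonical ordering witness of a 3-leaf dangerous tree: if both orderings of the
matched leaves qualify, the up-node of `b` is an ancestor of the up-node of `b'`. -/
def Witness3Canon (t : Tree V) (I E M : Finset (Sym2 V)) (c : QT t I) (a b b' : V) : Prop :=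
  Witness3 t I E M c a b b' ∧
  (Witness3 t I E M c a b' b →
    ∃ u u', qUpNode t I E b u ∧ qUpNode t I E b' u' ∧ qdescRep t I u u')

/-- `M̃` is obtained from `M` by switching, in each (3-leaf dangerous) tree `D̃` of `T̃`
corresponding to a minimally semi-closed tree of `T/I`, the matching link `bb'` to `ab'`. -/
def SwitchedMatching (t : Tree V) (I E M Mt : Finset (Sym2 V)) : Prop :=
  ∀ e : Sym2 V, e ∈ Mt ↔
    ((e ∈ M ∧ ∀ c : QT t I, MinSemiClosedQ t I E M c →
        ∀ x, x ∈ e → ¬ inT t (I ∪ Wtil t I E M) (qm t (I ∪ Wtil t I E M) c.out) x) ∨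
     (∃ (c : QT t I) (a b b' x y : V), MinSemiClosedQ t I E M c ∧
        Witness3Canon t (I ∪ Wtil t I E M) E M (qm t (I ∪ Wtil t I E M) c.out) a b b' ∧
        e = s(x, y) ∧ e ∈ E ∧ rel t (I ∪ Wtil t I E M) x a ∧
        rel t (I ∪ Wtil t I E M) y b' ∧
        ¬ qleafRep t (insert e (I ∪ Wtil t I E M)) x))

/-! ### Auxiliary geometry lemmas -/
set_option linter.unusedSectionVars false

section Aux

variable (t : Tree V)

lemma parent_iterate_root : ∀ n, t.parent^[n] t.root = t.root := by
  intro n; induction n with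
  | zero => rfl
  | succ n ih => rw [Function.iterate_succ_apply', ih, t.parent_root]

variable {t}

lemma desc_refl (w : V) : t.desc w w := ⟨0, rfl⟩

lemma desc_trans {w v z : V} (h1 : t.desc w v) (h2 : t.desc v z) : t.desc w z := by
  obtain ⟨n, hn⟩ := h1; obtain ⟨m, hm⟩ := h2
  exact ⟨n + m, by rw [Function.iterate_add_apply, hm, hn]⟩

lemma desc_root (z : V) : t.desc t.root z := t.reach z

lemma desc_root_eq {z : V} (h : t.desc z t.root) : z = t.root := by
  obtain ⟨n, hn⟩ := h; rw [parent_iterate_root] at hn; exact hn.symm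

lemma desc_of_parent {c x : V} (h : t.parent c = x) : t.desc x c := ⟨1, h⟩

lemma desc_parent_shift {w c : V} (h : t.desc w c) (hne : w ≠ c) : t.desc w (t.parent c) := by
  obtain ⟨n, hn⟩ := h
  cases n with
  | zero => exact absurd hn.symm hne
  | succ n => exact ⟨n, by rwa [Function.iterate_succ_apply] at hn⟩

lemma desc_step_down {w c : V} (h : t.desc w (t.parent c)) : t.desc w c := by
  obtain ⟨n, hn⟩ := h; exact ⟨n + 1, by rwa [Function.iterate_succ_apply]⟩

lemma eq_root_of_parent_eq {z : V} (h : t.parent z = z) : z = t.root := by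
  obtain ⟨n, hn⟩ := t.reach z
  have : ∀ m, t.parent^[m] z = z := by
    intro m; induction m with
    | zero => rfl
    | succ m ih => rw [Function.iterate_succ_apply', ih, h]
  rw [this n] at hn; exact hn

lemma depth_spec (z : V) : t.parent^[t.depth z] z = t.root :=
  @Nat.find_spec (fun n => t.parent^[n] z = t.root) (Classical.decPred _) (t.reach z)

lemma depth_min {z : V} {n : ℕ} (h : t.parent^[n] z = t.root) : t.depth z ≤ n :=
  @Nat.find_min' (fun n => t.parent^[n] z = t.root) (Classical.decPred _) (t.reach z) n h

lemma depth_root : t.depth t.root = 0 :=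
  Nat.le_zero.mp (depth_min (by rfl))

lemma depth_eq_zero_iff {z : V} : t.depth z = 0 ↔ z = t.root := by
  constructor
  · intro h; have := depth_spec (t := t) z; rwa [h] at this
  · rintro rfl; exact depth_root

lemma depth_parent_lt {z : V} (h : z ≠ t.root) : t.depth (t.parent z) < t.depth z := by
  have hz : t.depth z ≠ 0 := fun hh => h (depth_eq_zero_iff.mp hh)
  have h1 : t.parent^[t.depth z - 1] (t.parent z) = t.root := by
    have := depth_spec (t := t) z
    rw [← Function.iterate_succ_apply, Nat.succ_eq_add_one, Nat.sub_add_cancel (Nat.one_le_iff_ne_zero.mpr hz)]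
    exact this
  have := depth_min h1
  omega

lemma depth_parent_le (z : V) : t.depth (t.parent z) ≤ t.depth z := by
  by_cases h : z = t.root
  · subst h; rw [t.parent_root]
  · exact (depth_parent_lt h).le

lemma desc_depth_le {w z : V} (h : t.desc w z) : t.depth w ≤ t.depth z := by
  obtain ⟨n, hn⟩ := h
  subst hn
  induction n with
  | zero => rfl
  | succ n ih =>
    rw [Function.iterate_succ_apply']
    exact le_trans (depth_parent_le _) ih

lemma desc_depth_lt {w z : V} (h : t.desc w z) (hne : w ≠ z) : t.depth w < t.depth z := by
  have key : ∀ n (z : V), t.parent^[n] z = w → w ≠ z → t.depth w < t.depth z := by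
    intro n
    induction n with
    | zero => intro z hn hne; exact absurd hn.symm hne
    | succ n ih =>
      intro z hn hne
      rw [Function.iterate_succ_apply] at hn
      by_cases hz : z = t.root
      · subst hz
        rw [t.parent_root, parent_iterate_root] at hn
        exact absurd hn.symm hne
      · by_cases hw : w = t.parent z
        · rw [hw]; exact depth_parent_lt hz
        · exact lt_trans (ih _ hn hw) (depth_parent_lt hz)
  obtain ⟨n, hn⟩ := h
  exact key n z hn hne

lemma desc_antisymm {w z : V} (h1 : t.desc w z) (h2 : t.desc z w) : w = z := by
  by_contra hne
  exact absurd (desc_depth_lt h2 (Ne.symm hne)) (not_lt.mpr (desc_depth_le h1))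

lemma desc_eq_of_depth_le {w z : V} (h : t.desc w z) (hd : t.depth z ≤ t.depth w) : w = z := by
  by_contra hne
  exact absurd (desc_depth_lt h hne) (not_lt.mpr hd)

lemma desc_comparable {w w' z : V} (h1 : t.desc w z) (h2 : t.desc w' z) :
    t.desc w w' ∨ t.desc w' w := by
  obtain ⟨n, hn⟩ := h1; obtain ⟨m, hm⟩ := h2
  rcases le_total n m with h | h
  · right
    refine ⟨m - n, ?_⟩
    rw [← hn, ← Function.iterate_add_apply, Nat.sub_add_cancel h, hm]
  · left
    refine ⟨n - m, ?_⟩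
    rw [← hm, ← Function.iterate_add_apply, Nat.sub_add_cancel h, hn]

lemma leaf_desc_eq {ℓ z : V} (hl : t.IsLeaf ℓ) (h : t.desc ℓ z) : z = ℓ := by
  obtain ⟨n, hn⟩ := h
  induction n generalizing z with
  | zero => exact hn
  | succ n ih =>
    rw [Function.iterate_succ_apply] at hn
    have hz := ih hn
    by_cases hzl : z = ℓ
    · exact hzl
    · exact absurd hz (hl.2 z hzl)

lemma not_leaf_of_desc_ne {x z : V} (h : t.desc x z) (hne : x ≠ z) : ¬ t.IsLeaf x := by
  intro hl
  exact hne (leaf_desc_eq hl h).symm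

lemma child_exists {x z : V} (h : t.desc x z) (hne : x ≠ z) :
    ∃ c, t.parent c = x ∧ c ≠ x ∧ t.desc c z := by
  have hex : ∃ n, t.parent^[n] z = x := h
  classical
  let N := Nat.find hex
  have hN : t.parent^[N] z = x := Nat.find_spec hex
  have hN0 : N ≠ 0 := by
    intro h0
    rw [h0] at hN
    exact hne hN.symm
  have hNN : N - 1 + 1 = N := Nat.succ_pred_eq_of_ne_zero hN0
  refine ⟨t.parent^[N - 1] z, ?_, ?_, ⟨N - 1, rfl⟩⟩
  · calc t.parent (t.parent^[N - 1] z) = t.parent^[N - 1 + 1] z :=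
          (Function.iterate_succ_apply' _ _ _).symm
      _ = x := by rw [hNN]; exact hN
  · intro hc
    exact absurd (Nat.find_min hex (by omega : N - 1 < N)) (by exact fun hh => hh hc)

lemma children_disjoint {x c₁ c₂ z : V} (h1 : t.parent c₁ = x) (h2 : t.parent c₂ = x)
    (hc1 : c₁ ≠ x) (hc2 : c₂ ≠ x) (hd1 : t.desc c₁ z) (hd2 : t.desc c₂ z) : c₁ = c₂ := by
  have key : ∀ d₁ d₂ : V, t.parent d₁ = x → t.parent d₂ = x → d₁ ≠ x → t.desc d₁ d₂ → d₁ = d₂ := by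
    intro d₁ d₂ hp1 hp2 hne h
    obtain ⟨n, hn⟩ := h
    cases n with
    | zero => exact hn.symm
    | succ n =>
      exfalso
      rw [Function.iterate_succ_apply, hp2] at hn
      have hd : t.desc d₁ x := ⟨n, hn⟩
      have hroot : d₁ ≠ t.root := by
        intro hr
        rw [hr] at hp1
        rw [t.parent_root] at hp1
        exact hne (hr.trans hp1)
      have := desc_depth_le hd
      have h2 := depth_parent_lt (t := t) hroot
      rw [hp1] at h2
      omega
  rcases desc_comparable hd1 hd2 with h | h
  · exact key c₁ c₂ h1 h2 hc1 h
  · exact (key c₂ c₁ h2 h1 hc2 h).symm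

lemma exists_leaf_below {z : V} (hz : z ≠ t.root) : ∃ ℓ, t.IsLeaf ℓ ∧ t.desc z ℓ := by
  classical
  have hne : (Finset.univ.filter (fun w => t.desc z w)).Nonempty :=
    ⟨z, by simp [desc_refl]⟩
  obtain ⟨ℓ, hℓ, hmax⟩ := Finset.exists_max_image _ (t.depth) hne
  simp only [Finset.mem_filter, Finset.mem_univ, true_and] at hℓ
  refine ⟨ℓ, ⟨?_, ?_⟩, hℓ⟩
  · intro hr
    subst hr
    exact hz (desc_root_eq hℓ)
  · intro u hu hpu
    have hzu : t.desc z u := desc_trans hℓ (desc_of_parent hpu)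
    have h1 := hmax u (by simp [hzu])
    have hur : u ≠ t.root := by
      intro hr
      rw [hr, t.parent_root] at hpu
      subst hpu
      exact hz (desc_root_eq hℓ)
    have := depth_parent_lt (t := t) hur
    rw [hpu] at this
    omega

lemma exists_lca (p q : V) : ∃ m : V, t.desc m p ∧ t.desc m q ∧
    ∀ w, t.desc w p → t.desc w q → t.desc w m := by
  classical
  have hne : (Finset.univ.filter (fun w => t.desc w p ∧ t.desc w q)).Nonempty :=
    ⟨t.root, by simp [desc_root]⟩
  obtain ⟨m, hm, hmax⟩ := Finset.exists_max_image _ (t.depth) hne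
  simp only [Finset.mem_filter, Finset.mem_univ, true_and] at hm
  refine ⟨m, hm.1, hm.2, ?_⟩
  intro w hwp hwq
  rcases desc_comparable hwp hm.1 with h | h
  · exact h
  · have := hmax w (by simp [hwp, hwq])
    rw [desc_eq_of_depth_le h this]
    exact desc_refl w

end Aux

/-! ### Cover calculus -/

lemma covers_iff {t : Tree V} {p q w : V} :
    covers t s(p, q) w ↔ ((t.desc w p ∧ ¬ t.desc w q) ∨ (t.desc w q ∧ ¬ t.desc w p)) := by
  constructor
  · rintro ⟨u, v, huv, hpath⟩
    rcases Sym2.eq_iff.mp huv with ⟨rfl, rfl⟩ | ⟨rfl, rfl⟩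
    · exact hpath
    · exact hpath.symm
  · intro h
    exact ⟨p, q, rfl, h⟩

lemma covers_mk {t : Tree V} {p q w : V} (h1 : t.desc w p) (h2 : ¬ t.desc w q) :
    covers t s(p, q) w := covers_iff.mpr (Or.inl ⟨h1, h2⟩)

lemma covers_rep {t : Tree V} {e : Sym2 V} {w : V} (h : covers t e w) :
    ∃ p q, e = s(p, q) ∧ t.desc w p ∧ ¬ t.desc w q := by
  obtain ⟨u, v, rfl, hpath⟩ := h
  rcases hpath with ⟨h1, h2⟩ | ⟨h1, h2⟩
  · exact ⟨u, v, rfl, h1, h2⟩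
  · exact ⟨v, u, Sym2.eq_swap, h1, h2⟩

lemma not_covers_root {t : Tree V} {e : Sym2 V} : ¬ covers t e t.root := by
  intro h
  obtain ⟨p, q, _, h1, h2⟩ := covers_rep h
  exact h2 (desc_root q)

lemma not_covers_diag {t : Tree V} {e : Sym2 V} (h : e.IsDiag) {w : V} : ¬ covers t e w := by
  intro hc
  obtain ⟨p, q, rfl, h1, h2⟩ := covers_rep hc
  rw [Sym2.mk_isDiag_iff] at h
  subst h
  exact h2 h1

lemma covers_leaf_end {t : Tree V} {e : Sym2 V} {ℓ : V} (hl : t.IsLeaf ℓ)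
    (h : covers t e ℓ) : ∃ y, e = s(ℓ, y) ∧ ¬ t.desc ℓ y := by
  obtain ⟨p, q, rfl, h1, h2⟩ := covers_rep h
  have := leaf_desc_eq hl h1
  subst this
  exact ⟨q, rfl, h2⟩

lemma covers_leaf_edge {t : Tree V} {ℓ y : V} (hl : t.IsLeaf ℓ) (hy : y ≠ ℓ) :
    covers t s(ℓ, y) ℓ :=
  covers_mk (desc_refl ℓ) (fun h => hy (leaf_desc_eq hl h))

lemma covers_parent_link {t : Tree V} {ℓ w : V} (h : covers t s(ℓ, t.parent ℓ) w) : w = ℓ := by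
  rcases covers_iff.mp h with ⟨h1, h2⟩ | ⟨h1, h2⟩
  · by_contra hne
    exact h2 (desc_parent_shift h1 hne)
  · exact absurd (desc_step_down h1) h2

/-! ### Shadow lemmas -/

lemma shadow_vertical {t : Tree V} {a m x : V} (hma : t.desc m a) (hxm : t.desc x m)
    (hne : m ≠ x) : Shadow t s(m, x) s(a, x) := by
  intro w hw
  rcases covers_iff.mp hw with ⟨h1, h2⟩ | ⟨h1, h2⟩
  · exact covers_mk (desc_trans h1 hma) h2
  · refine covers_iff.mpr (Or.inr ⟨h1, fun hwa => ?_⟩)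
    rcases desc_comparable hwa hma with h | h
    · exact h2 h
    · exact hne (desc_antisymm (desc_trans h h1) hxm)

lemma shadow_vertical_top {t : Tree V} {a z v : V} (hza : t.desc z a) (hvz : t.desc v z) :
    Shadow t s(a, z) s(a, v) := by
  intro w hw
  rcases covers_iff.mp hw with ⟨h1, h2⟩ | ⟨h1, h2⟩
  · exact covers_mk h1 (fun hwv => h2 (desc_trans hwv hvz))
  · exact absurd (desc_trans h1 hza) h2

lemma shadow_over_top {t : Tree V} {s b y : V} (hsb : t.desc s b) (hsy : ¬ t.desc s y) :
    Shadow t s(s, y) s(b, y) := by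
  intro w hw
  rcases covers_iff.mp hw with ⟨h1, h2⟩ | ⟨h1, h2⟩
  · exact covers_mk (desc_trans h1 hsb) h2
  · refine covers_iff.mpr (Or.inr ⟨h1, fun hwb => ?_⟩)
    rcases desc_comparable hwb hsb with h | h
    · exact h2 h
    · exact hsy (desc_trans h h1)

lemma shadow_shrink_top {t : Tree V} {a c x : V} (hc : t.parent c = x) (hca : t.desc c a)
    (hcx : c ≠ x) : Shadow t s(a, c) s(a, x) := by
  intro w hw
  rcases covers_iff.mp hw with ⟨h1, h2⟩ | ⟨h1, h2⟩
  · exact covers_mk h1 (fun hwx => h2 (desc_trans hwx (desc_of_parent hc)))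
  · by_cases hwc : w = c
    · subst hwc
      exact absurd hca h2
    · exact covers_iff.mpr (Or.inr ⟨by rw [← hc]; exact desc_parent_shift h1 hwc, h2⟩)

lemma shadow_lift {t : Tree V} {ℓ y : V} (h : ¬ t.desc ℓ y) :
    Shadow t s(t.parent ℓ, y) s(ℓ, y) := by
  intro w hw
  rcases covers_iff.mp hw with ⟨h1, h2⟩ | ⟨h1, h2⟩
  · exact covers_mk (desc_step_down h1) h2
  · refine covers_iff.mpr (Or.inr ⟨h1, fun hwl => ?_⟩)
    by_cases hwe : w = ℓ
    · subst hwe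
      exact h h1
    · exact h2 (desc_parent_shift hwl hwe)

lemma shadow_lca {t : Tree V} {z x h : V} (hhx : t.desc h x)
    (hmax : ∀ w, t.desc w z → t.desc w x → t.desc w h) : Shadow t s(z, h) s(z, x) := by
  intro w hw
  rcases covers_iff.mp hw with ⟨h1, h2⟩ | ⟨h1, h2⟩
  · exact covers_mk h1 (fun hwx => h2 (hmax w h1 hwx))
  · exact covers_iff.mpr (Or.inr ⟨desc_trans h1 hhx, h2⟩)

/-! ### Twin link lemmas -/

lemma rel_symm {t : Tree V} {I : Finset (Sym2 V)} {u v : V} (h : rel t I u v) : rel t I v u :=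
  (relSetoid t I).iseqv.symm h

lemma twin_pair_symm {t : Tree V} {a b : V} (h : TwinPair t a b) : TwinPair t b a := by
  obtain ⟨hla, hlb, hab, hq⟩ := h
  have hswap : s(b, a) = s(a, b) := Sym2.eq_swap
  have hrab : rel t {s(a, b)} a b := by
    intro w _ hpath
    exact ⟨s(a, b), Finset.mem_singleton_self _, a, b, rfl, hpath⟩
  refine ⟨hlb, hla, hab.symm, ?_⟩
  rw [hswap]
  refine ⟨fun hc => hq.1 ((relSetoid t _).iseqv.trans hrab hc), fun z hz => ?_⟩
  have h1 : rel t {s(a, b)} (t.parent z) a :=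
    (relSetoid t _).iseqv.trans hz (rel_symm hrab)
  exact (relSetoid t _).iseqv.trans (hq.2 z h1) hrab

lemma twin_subtree {t : Tree V} {a b sS : V} (htw : TwinPair t a b)
    (hsa : t.desc sS a) (hsb : t.desc sS b)
    (hlca : ∀ w, t.desc w a → t.desc w b → t.desc w sS) :
    ∀ z, t.desc sS z → t.desc z a ∨ t.desc z b := by
  obtain ⟨hla, hlb, hab, hq⟩ := htw
  have hrel_s : rel t {s(a, b)} sS a := by
    intro w _ hpath
    rcases hpath with ⟨h1, h2⟩ | ⟨h1, h2⟩
    · exact absurd (desc_trans h1 hsa) h2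
    · exact ⟨s(a, b), Finset.mem_singleton_self _,
        covers_mk h1 (fun hwb => h2 (hlca w h1 hwb))⟩
  have hs_root : sS ≠ t.root := by
    intro h
    subst h
    exact hq.1 ((relSetoid t _).iseqv.symm hrel_s)
  have hrel : ∀ n (z : V), t.parent^[n] z = sS → rel t {s(a, b)} z a := by
    intro n
    induction n with
    | zero => intro z hz; subst hz; exact hrel_s
    | succ n ih =>
      intro z hz
      rw [Function.iterate_succ_apply] at hz
      exact hq.2 z (ih _ hz)
  intro z hz
  by_cases hza : t.desc z a
  · exact Or.inl hza
  · obtain ⟨n, hn⟩ := hz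
    have hzroot : z ≠ t.root := by
      intro h
      subst h
      exact hs_root (desc_root_eq ⟨n, hn⟩)
    obtain ⟨e, he, hc⟩ := hrel n z hn z hzroot (Or.inl ⟨desc_refl z, hza⟩)
    rw [Finset.mem_singleton] at he
    subst he
    rcases covers_iff.mp hc with ⟨h1, _⟩ | ⟨h1, _⟩
    · exact absurd h1 hza
    · exact Or.inr h1

lemma no_double_twin {t : Tree V} {c d w : V} (htw : TwinPair t c d)
    (hwc : w ≠ c) (hwd : w ≠ d) : ¬ TwinPair t c w := by
  intro htw2
  obtain ⟨s₀, hs₀c, hs₀d, hlca₀⟩ := exists_lca (t := t) c d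
  obtain ⟨s₁, hs₁c, hs₁w, hlca₁⟩ := exists_lca (t := t) c w
  rcases desc_comparable hs₀c hs₁c with h | h
  · have hw : t.desc s₀ w := desc_trans h hs₁w
    rcases twin_subtree htw hs₀c hs₀d hlca₀ w hw with h' | h'
    · exact hwc (leaf_desc_eq htw2.2.1 h').symm
    · exact hwd (leaf_desc_eq htw2.2.1 h').symm
  · have hd : t.desc s₁ d := desc_trans h hs₀d
    rcases twin_subtree htw2 hs₁c hs₁w hlca₁ d hd with h' | h'
    · exact htw.2.2.1 (leaf_desc_eq htw.2.1 h')
    · exact hwd (leaf_desc_eq htw.2.1 h')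

lemma is_twin_link {t : Tree V} {a b : V} (htw : TwinPair t a b) : IsTwinLinkE t s(a, b) :=
  ⟨a, b, rfl, htw⟩

lemma not_twinlink_pair {t : Tree V} {c d w : V} (htw : TwinPair t c d)
    (hwc : w ≠ c) (hwd : w ≠ d) : ¬ IsTwinLinkE t s(c, w) := by
  rintro ⟨p, q, hpq, htw'⟩
  rcases Sym2.eq_iff.mp hpq with ⟨rfl, rfl⟩ | ⟨rfl, rfl⟩
  · exact no_double_twin htw hwc hwd htw'
  · exact no_double_twin htw hwc hwd (twin_pair_symm htw')

lemma not_twinlink_not_leaf {t : Tree V} {p q : V} (h : ¬ t.IsLeaf p) :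
    ¬ IsTwinLinkE t s(p, q) := by
  rintro ⟨c, d, hpq, htw⟩
  rcases Sym2.eq_iff.mp hpq with ⟨rfl, rfl⟩ | ⟨rfl, rfl⟩
  · exact h htw.1
  · exact h htw.2.1

/-! ### Optimality tools -/

noncomputable def linkLen (t : Tree V) (e : Sym2 V) : ℕ :=
  (Finset.univ.filter (fun w => covers t e w)).card

noncomputable def potPhi (t : Tree V) (G : Finset (Sym2 V)) : ℕ := ∑ e ∈ G, linkLen t e

lemma linkLen_lt_of_proper {t : Tree V} {e e' : Sym2 V} (h : ProperShadow t e' e) :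
    linkLen t e' < linkLen t e := by
  obtain ⟨hsh, w, hw1, hw2⟩ := h
  apply Finset.card_lt_card
  refine (Finset.ssubset_iff_of_subset ?_).mpr ⟨w, by simp [hw1], by simp [hw2]⟩
  intro u hu
  simp only [Finset.mem_filter, Finset.mem_univ, true_and] at hu ⊢
  exact hsh u hu

lemma twin_max {t : Tree V} {E F : Finset (Sym2 V)} (hnd : ∀ e ∈ E, ¬ e.IsDiag)
    (hsh : ShadowClosed t E) (hF : IsGoodCover t E F) :
    ∀ H ⊆ E, IsCover t H → H.card = F.card → twinCount t H ≤ twinCount t F := by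
  classical
  intro H hHE hHcov hHcard
  by_contra hgt
  push_neg at hgt
  obtain ⟨hFE, ⟨hFcov, hFirr, hFsm3⟩, hopt, htcmax⟩ := hF
  set P := E.powerset.filter (fun G => IsCover t G ∧ G.card = F.card) with hPdef
  have hHP : H ∈ P := by
    simp only [hPdef, Finset.mem_filter, Finset.mem_powerset]
    exact ⟨hHE, hHcov, hHcard⟩
  obtain ⟨G₁, hG₁P, hmax⟩ := P.exists_max_image (twinCount t) ⟨H, hHP⟩
  set P' := P.filter (fun G => twinCount t G = twinCount t G₁) with hP'def
  have hG₁P' : G₁ ∈ P' := by simp [hP'def, hG₁P]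
  obtain ⟨G, hGP', hmin⟩ := P'.exists_min_image (potPhi t) ⟨G₁, hG₁P'⟩
  have hGP : G ∈ P := (Finset.mem_filter.mp hGP').1
  have hGtc : twinCount t G = twinCount t G₁ := (Finset.mem_filter.mp hGP').2
  have hGE : G ⊆ E := Finset.mem_powerset.mp (Finset.mem_filter.mp hGP).1
  have hGcov : IsCover t G := (Finset.mem_filter.mp hGP).2.1
  have hGcard : G.card = F.card := (Finset.mem_filter.mp hGP).2.2
  -- any cover contained in E has size ≥ F.card
  have hnosmall : ∀ K : Finset (Sym2 V), K ⊆ E → IsCover t K → F.card ≤ K.card := hopt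
  have herase_no : ∀ f ∈ G, ¬ IsCover t (G.erase f) := by
    intro f hf hcov'
    have h1 := hnosmall _ ((Finset.erase_subset f G).trans hGE) hcov'
    have h2 : (G.erase f).card < G.card := Finset.card_erase_lt_of_mem hf
    omega
  have hSM : ShadowsMinimal t G := by
    refine ⟨hGcov, herase_no, ?_⟩
    intro e heG e' hPS hcov₂
    by_cases hdiag : e'.IsDiag
    · refine herase_no e heG (fun w hw => ?_)
      obtain ⟨g, hg, hgc⟩ := hcov₂ w hw
      rcases Finset.mem_insert.mp hg with rfl | hg'
      · exact absurd hgc (not_covers_diag hdiag)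
      · exact ⟨g, hg', hgc⟩
    · have he'E : e' ∈ E := hsh e (hGE heG) e' hdiag hPS.1
      by_cases he'mem : e' ∈ G.erase e
      · rw [Finset.insert_eq_self.mpr he'mem] at hcov₂
        exact herase_no e heG hcov₂
      · set G₂ := insert e' (G.erase e) with hG₂def
        have hG₂card : G₂.card = F.card := by
          rw [hG₂def, Finset.card_insert_of_notMem he'mem, Finset.card_erase_of_mem heG]
          have : 1 ≤ G.card := Finset.card_pos.mpr ⟨e, heG⟩
          omega
        have hG₂E : G₂ ⊆ E :=
          Finset.insert_subset he'E ((Finset.erase_subset e G).trans hGE)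
        have hG₂P : G₂ ∈ P := by
          simp only [hPdef, Finset.mem_filter, Finset.mem_powerset]
          exact ⟨hG₂E, hcov₂, hG₂card⟩
        have hphi : potPhi t G₂ < potPhi t G := by
          have h1 : potPhi t G₂ = linkLen t e' + potPhi t (G.erase e) := by
            rw [hG₂def, potPhi, Finset.sum_insert he'mem]; rfl
          have h2 : potPhi t (G.erase e) + linkLen t e = potPhi t G :=
            Finset.sum_erase_add G _ heG
          have := linkLen_lt_of_proper hPS
          omega
        have htcle : twinCount t G₂ ≤ twinCount t G₁ := hmax G₂ hG₂P
        by_cases htc2 : twinCount t G₂ = twinCount t G₁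
        · exact absurd (hmin G₂ (Finset.mem_filter.mpr ⟨hG₂P, htc2⟩)) (not_le.mpr hphi)
        · have htwe : IsTwinLinkE t e := by
            by_contra hnot
            have hsub : G.filter (IsTwinLinkE t) ⊆ G₂.filter (IsTwinLinkE t) := by
              intro g hg
              rw [Finset.mem_filter] at hg ⊢
              refine ⟨Finset.mem_insert_of_mem (Finset.mem_erase.mpr ⟨?_, hg.1⟩), hg.2⟩
              rintro rfl
              exact hnot hg.2
            have := Finset.card_le_card hsub
            have h1 : twinCount t G ≤ twinCount t G₂ := this
            omega
          obtain ⟨c₀, d₀, hecd₀, htwcd₀⟩ := htwe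
          have repair : ∀ c d : V, e = s(c, d) → TwinPair t c d → ¬ covers t e' c → False := by
            intro c d hecd htwcd hmisscov
            have hcd : c ≠ d := htwcd.2.2.1
            have hcroot : c ≠ t.root := htwcd.1.1
            obtain ⟨f, hfmem, hfc⟩ := hcov₂ c hcroot
            have hf : f ∈ G.erase e := by
              rcases Finset.mem_insert.mp hfmem with rfl | hg'
              · exact absurd hfc hmisscov
              · exact hg'
            have hfe : f ≠ e := (Finset.mem_erase.mp hf).1
            have hfG : f ∈ G := (Finset.mem_erase.mp hf).2
            obtain ⟨w₀, hfw, hw₀⟩ := covers_leaf_end htwcd.1 hfc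
            have hw₀c : w₀ ≠ c := by rintro rfl; exact hw₀ (desc_refl w₀)
            have hw₀d : w₀ ≠ d := by
              rintro rfl
              exact hfe (hfw.trans hecd.symm)
            have hecov : covers t e c := by
              rw [hecd]
              exact covers_leaf_edge htwcd.1 (fun h => hcd h.symm)
            have hefne : e ∈ G.erase f := Finset.mem_erase.mpr ⟨fun h => hfe h.symm, heG⟩
            by_cases hpar : w₀ = t.parent c
            · refine herase_no f hfG (fun w hw => ?_)
              obtain ⟨g, hg, hgc⟩ := hGcov w hw
              by_cases hgf : g = f
              · subst hgf
                rw [hfw, hpar] at hgc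
                have hwc := covers_parent_link hgc
                subst hwc
                exact ⟨e, hefne, hecov⟩
              · exact ⟨g, Finset.mem_erase.mpr ⟨hgf, hg⟩, hgc⟩
            · set g' := s(t.parent c, w₀) with hg'def
              have hshad : Shadow t g' f := by
                rw [hfw]
                exact shadow_lift hw₀
              have hg'nd : ¬ g'.IsDiag := by
                rw [hg'def, Sym2.mk_isDiag_iff]
                exact fun h => hpar h.symm
              have hg'E : g' ∈ E := hsh f (hGE hfG) g' hg'nd hshad
              have hg'notc : ¬ covers t g' c := by
                intro h
                rcases covers_iff.mp h with ⟨h1, _⟩ | ⟨h1, _⟩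
                · have := leaf_desc_eq htwcd.1 h1
                  exact hcroot (eq_root_of_parent_eq this)
                · exact hw₀c (leaf_desc_eq htwcd.1 h1)
              have hcovtrans : ∀ w, covers t f w → w ≠ c → covers t g' w := by
                intro w hcw hwc
                rw [hfw] at hcw
                rcases covers_iff.mp hcw with ⟨h1, h2⟩ | ⟨h1, h2⟩
                · exact covers_mk (desc_parent_shift h1 hwc) h2
                · exact covers_iff.mpr (Or.inr ⟨h1, fun hp => h2 (desc_step_down hp)⟩)
              have hcover3 : ∀ K : Finset (Sym2 V), g' ∈ K → e ∈ K → (G.erase f ⊆ K) →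
                  IsCover t K := by
                intro K hg'K heK hsubK w hw
                obtain ⟨g, hg, hgc⟩ := hGcov w hw
                by_cases hgf : g = f
                · subst hgf
                  by_cases hwc : w = c
                  · subst hwc
                    exact ⟨e, heK, hecov⟩
                  · exact ⟨g', hg'K, hcovtrans w hgc hwc⟩
                · exact ⟨g, hsubK (Finset.mem_erase.mpr ⟨hgf, hg⟩), hgc⟩
              by_cases hg'G : g' ∈ G
              · refine herase_no f hfG (hcover3 _ ?_ hefne (Finset.Subset.refl _))
                refine Finset.mem_erase.mpr ⟨?_, hg'G⟩
                intro h
                rw [h] at hg'notc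
                exact hg'notc hfc
              · have hg'nf : g' ∉ G.erase f := fun h => hg'G (Finset.mem_of_mem_erase h)
                set G₃ := insert g' (G.erase f) with hG₃def
                have hG₃cov : IsCover t G₃ :=
                  hcover3 _ (Finset.mem_insert_self _ _) (Finset.mem_insert_of_mem hefne)
                    (Finset.subset_insert _ _)
                have hG₃card : G₃.card = F.card := by
                  rw [hG₃def, Finset.card_insert_of_notMem hg'nf,
                    Finset.card_erase_of_mem hfG]
                  have : 1 ≤ G.card := Finset.card_pos.mpr ⟨f, hfG⟩
                  omega
                have hG₃E : G₃ ⊆ E :=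
                  Finset.insert_subset hg'E ((Finset.erase_subset f G).trans hGE)
                have hG₃P : G₃ ∈ P := by
                  simp only [hPdef, Finset.mem_filter, Finset.mem_powerset]
                  exact ⟨hG₃E, hG₃cov, hG₃card⟩
                have hfnotw : ¬ IsTwinLinkE t f := by
                  rw [hfw]
                  exact not_twinlink_pair htwcd hw₀c hw₀d
                have htc3 : twinCount t G ≤ twinCount t G₃ := by
                  apply Finset.card_le_card
                  intro g hg
                  rw [Finset.mem_filter] at hg ⊢
                  refine ⟨Finset.mem_insert_of_mem (Finset.mem_erase.mpr ⟨?_, hg.1⟩), hg.2⟩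
                  rintro rfl
                  exact hfnotw hg.2
                have htc3' : twinCount t G₃ = twinCount t G₁ :=
                  le_antisymm (hmax G₃ hG₃P) (hGtc ▸ htc3)
                have hphi3 : potPhi t G₃ < potPhi t G := by
                  have h1 : potPhi t G₃ = linkLen t g' + potPhi t (G.erase f) := by
                    rw [hG₃def, potPhi, Finset.sum_insert hg'nf]; rfl
                  have h2 : potPhi t (G.erase f) + linkLen t f = potPhi t G :=
                    Finset.sum_erase_add G _ hfG
                  have hlt : linkLen t g' < linkLen t f :=
                    linkLen_lt_of_proper ⟨hshad, c, hfc, hg'notc⟩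
                  omega
                exact absurd (hmin G₃ (Finset.mem_filter.mpr ⟨hG₃P, htc3'⟩))
                  (not_le.mpr hphi3)
          have hmiss : ¬ covers t e' c₀ ∨ ¬ covers t e' d₀ := by
            by_contra hcon
            push_neg at hcon
            obtain ⟨y, hey, hy⟩ := covers_leaf_end htwcd₀.1 hcon.1
            have hyd : y = d₀ := by
              subst hey
              rcases covers_iff.mp hcon.2 with ⟨h1, h2⟩ | ⟨h1, h2⟩
              · exact absurd (leaf_desc_eq htwcd₀.2.1 h1) htwcd₀.2.2.1
              · exact (leaf_desc_eq htwcd₀.2.1 h1)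
            obtain ⟨w, hwcov, hwnot⟩ := hPS.2
            rw [hey, hyd, ← hecd₀] at hwnot
            exact hwnot hwcov
          rcases hmiss with h | h
          · exact repair c₀ d₀ hecd₀ htwcd₀ h
          · exact repair d₀ c₀ (hecd₀.trans Sym2.eq_swap) (twin_pair_symm htwcd₀) h
  have hfinal := htcmax G hGE hSM hGcard
  have h1 : twinCount t H ≤ twinCount t G₁ := hmax H hHP
  omega

/-! ### Exchange lemmas -/

lemma exchange2 {t : Tree V} {E F : Finset (Sym2 V)} (hnd : ∀ e ∈ E, ¬ e.IsDiag)
    (hsh : ShadowClosed t E) (hF : IsGoodCover t E F) {r₁ r₂ e₁ e₂ : Sym2 V}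
    (hr₁ : r₁ ∈ F) (hr₂ : r₂ ∈ F) (hrne : r₁ ≠ r₂) (he₁ : e₁ ∈ E) (he₂ : e₂ ∈ E)
    (htr : ∀ w, covers t r₁ w ∨ covers t r₂ w → covers t e₁ w ∨ covers t e₂ w)
    (htw₁ : ¬ IsTwinLinkE t r₁) (htw₂ : ¬ IsTwinLinkE t r₂)
    (hte : IsTwinLinkE t e₁) (hnf : e₁ ∉ F) : False := by
  classical
  set G := insert e₁ (insert e₂ ((F.erase r₁).erase r₂)) with hGdef
  have hsubF : (F.erase r₁).erase r₂ ⊆ F := (Finset.erase_subset _ _).trans (Finset.erase_subset _ _)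
  have hGE : G ⊆ E := by
    refine Finset.insert_subset he₁ (Finset.insert_subset he₂ (hsubF.trans hF.1))
  have hGcov : IsCover t G := by
    intro w hw
    obtain ⟨g, hg, hgc⟩ := hF.2.1.1 w hw
    by_cases h1 : g = r₁
    · subst h1
      rcases htr w (Or.inl hgc) with h | h
      · exact ⟨e₁, Finset.mem_insert_self _ _, h⟩
      · exact ⟨e₂, Finset.mem_insert_of_mem (Finset.mem_insert_self _ _), h⟩
    · by_cases h2 : g = r₂
      · subst h2
        rcases htr w (Or.inr hgc) with h | h
        · exact ⟨e₁, Finset.mem_insert_self _ _, h⟩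
        · exact ⟨e₂, Finset.mem_insert_of_mem (Finset.mem_insert_self _ _), h⟩
      · exact ⟨g, Finset.mem_insert_of_mem (Finset.mem_insert_of_mem
          (Finset.mem_erase.mpr ⟨h2, Finset.mem_erase.mpr ⟨h1, hg⟩⟩)), hgc⟩
  have h2F : 2 ≤ F.card := by
    have : ({r₁, r₂} : Finset (Sym2 V)) ⊆ F := by
      intro g hg; rcases Finset.mem_insert.mp hg with rfl | hg
      · exact hr₁
      · rw [Finset.mem_singleton] at hg; subst hg; exact hr₂
    have := Finset.card_le_card this
    rwa [Finset.card_pair hrne] at this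
  have herase2 : ((F.erase r₁).erase r₂).card = F.card - 2 := by
    rw [Finset.card_erase_of_mem (Finset.mem_erase.mpr ⟨fun h => hrne h.symm, hr₂⟩),
      Finset.card_erase_of_mem hr₁]
    omega
  have hle : G.card ≤ F.card := by
    calc G.card ≤ (insert e₂ ((F.erase r₁).erase r₂)).card + 1 := Finset.card_insert_le _ _
    _ ≤ ((F.erase r₁).erase r₂).card + 2 := by
        have := Finset.card_insert_le e₂ ((F.erase r₁).erase r₂); omega
    _ ≤ F.card := by omega
  have hge : F.card ≤ G.card := hF.2.2.1 G hGE hGcov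
  have hcard : G.card = F.card := le_antisymm hle hge
  have htc : twinCount t F + 1 ≤ twinCount t G := by
    have hsub : insert e₁ (F.filter (IsTwinLinkE t)) ⊆ G.filter (IsTwinLinkE t) := by
      intro g hg
      rcases Finset.mem_insert.mp hg with rfl | hg
      · exact Finset.mem_filter.mpr ⟨Finset.mem_insert_self _ _, hte⟩
      · rw [Finset.mem_filter] at hg ⊢
        refine ⟨Finset.mem_insert_of_mem (Finset.mem_insert_of_mem
          (Finset.mem_erase.mpr ⟨?_, Finset.mem_erase.mpr ⟨?_, hg.1⟩⟩)), hg.2⟩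
        · rintro rfl; exact htw₂ hg.2
        · rintro rfl; exact htw₁ hg.2
    have := Finset.card_le_card hsub
    rwa [Finset.card_insert_of_notMem (fun h => hnf (Finset.mem_filter.mp h).1)] at this
  have := twin_max hnd hsh hF G hGE hGcov hcard
  omega

lemma exchange3 {t : Tree V} {E F : Finset (Sym2 V)} (hnd : ∀ e ∈ E, ¬ e.IsDiag)
    (hsh : ShadowClosed t E) (hF : IsGoodCover t E F) {r₁ r₂ r₃ e₁ e₂ e₃ : Sym2 V}
    (hr₁ : r₁ ∈ F) (hr₂ : r₂ ∈ F) (hr₃ : r₃ ∈ F) (h12 : r₁ ≠ r₂) (h13 : r₁ ≠ r₃)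
    (h23 : r₂ ≠ r₃) (he₁ : e₁ ∈ E) (he₂ : e₂ ∈ E) (he₃ : e₃ ∈ E)
    (htr : ∀ w, covers t r₁ w ∨ covers t r₂ w ∨ covers t r₃ w →
      covers t e₁ w ∨ covers t e₂ w ∨ covers t e₃ w)
    (htw₁ : ¬ IsTwinLinkE t r₁) (htw₂ : ¬ IsTwinLinkE t r₂) (htw₃ : ¬ IsTwinLinkE t r₃)
    (hte : IsTwinLinkE t e₁) (hnf : e₁ ∉ F) : False := by
  classical
  set R := ((F.erase r₁).erase r₂).erase r₃ with hRdef
  set G := insert e₁ (insert e₂ (insert e₃ R)) with hGdef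
  have hsubF : R ⊆ F := ((Finset.erase_subset _ _).trans (Finset.erase_subset _ _)).trans
    (Finset.erase_subset _ _)
  have hGE : G ⊆ E := Finset.insert_subset he₁ (Finset.insert_subset he₂
    (Finset.insert_subset he₃ (hsubF.trans hF.1)))
  have hme₁ : e₁ ∈ G := Finset.mem_insert_self _ _
  have hme₂ : e₂ ∈ G := Finset.mem_insert_of_mem (Finset.mem_insert_self _ _)
  have hme₃ : e₃ ∈ G := Finset.mem_insert_of_mem (Finset.mem_insert_of_mem
    (Finset.mem_insert_self _ _))
  have hmR : ∀ g ∈ R, g ∈ G := fun g hg => Finset.mem_insert_of_mem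
    (Finset.mem_insert_of_mem (Finset.mem_insert_of_mem hg))
  have hGcov : IsCover t G := by
    intro w hw
    obtain ⟨g, hg, hgc⟩ := hF.2.1.1 w hw
    by_cases h1 : g = r₁
    · subst h1
      rcases htr w (Or.inl hgc) with h | h | h
      exacts [⟨e₁, hme₁, h⟩, ⟨e₂, hme₂, h⟩, ⟨e₃, hme₃, h⟩]
    · by_cases h2 : g = r₂
      · subst h2
        rcases htr w (Or.inr (Or.inl hgc)) with h | h | h
        exacts [⟨e₁, hme₁, h⟩, ⟨e₂, hme₂, h⟩, ⟨e₃, hme₃, h⟩]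
      · by_cases h3 : g = r₃
        · subst h3
          rcases htr w (Or.inr (Or.inr hgc)) with h | h | h
          exacts [⟨e₁, hme₁, h⟩, ⟨e₂, hme₂, h⟩, ⟨e₃, hme₃, h⟩]
        · exact ⟨g, hmR g (Finset.mem_erase.mpr ⟨h3, Finset.mem_erase.mpr
            ⟨h2, Finset.mem_erase.mpr ⟨h1, hg⟩⟩⟩), hgc⟩
  have h3F : 3 ≤ F.card := by
    have hsub : ({r₁, r₂, r₃} : Finset (Sym2 V)) ⊆ F := by
      intro g hg
      rcases Finset.mem_insert.mp hg with rfl | hg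
      · exact hr₁
      rcases Finset.mem_insert.mp hg with rfl | hg
      · exact hr₂
      rw [Finset.mem_singleton] at hg; subst hg; exact hr₃
    have hcard3 : ({r₁, r₂, r₃} : Finset (Sym2 V)).card = 3 := by
      rw [Finset.card_insert_of_notMem, Finset.card_pair h23]
      simp only [Finset.mem_insert, Finset.mem_singleton]
      push_neg
      exact ⟨h12, h13⟩
    have := Finset.card_le_card hsub
    omega
  have herase3 : R.card = F.card - 3 := by
    rw [hRdef, Finset.card_erase_of_mem (Finset.mem_erase.mpr ⟨fun h => h23 h.symm,
      Finset.mem_erase.mpr ⟨fun h => h13 h.symm, hr₃⟩⟩),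
      Finset.card_erase_of_mem (Finset.mem_erase.mpr ⟨fun h => h12 h.symm, hr₂⟩),
      Finset.card_erase_of_mem hr₁]
    omega
  have hle : G.card ≤ F.card := by
    have c1 := Finset.card_insert_le e₁ (insert e₂ (insert e₃ R))
    have c2 := Finset.card_insert_le e₂ (insert e₃ R)
    have c3 := Finset.card_insert_le e₃ R
    rw [hGdef]
    omega
  have hge : F.card ≤ G.card := hF.2.2.1 G hGE hGcov
  have hcard : G.card = F.card := le_antisymm hle hge
  have htc : twinCount t F + 1 ≤ twinCount t G := by
    have hsub : insert e₁ (F.filter (IsTwinLinkE t)) ⊆ G.filter (IsTwinLinkE t) := by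
      intro g hg
      rcases Finset.mem_insert.mp hg with rfl | hg
      · exact Finset.mem_filter.mpr ⟨hme₁, hte⟩
      · rw [Finset.mem_filter] at hg ⊢
        refine ⟨hmR g (Finset.mem_erase.mpr ⟨?_, Finset.mem_erase.mpr ⟨?_,
          Finset.mem_erase.mpr ⟨?_, hg.1⟩⟩⟩), hg.2⟩
        · rintro rfl; exact htw₃ hg.2
        · rintro rfl; exact htw₂ hg.2
        · rintro rfl; exact htw₁ hg.2
    have := Finset.card_le_card hsub
    rwa [Finset.card_insert_of_notMem (fun h => hnf (Finset.mem_filter.mp h).1)] at this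
  have := twin_max hnd hsh hF G hGE hGcov hcard
  omega

lemma shrink2 {t : Tree V} {E F : Finset (Sym2 V)} (hF : IsGoodCover t E F)
    {r₁ r₂ e₁ : Sym2 V} (hr₁ : r₁ ∈ F) (hr₂ : r₂ ∈ F) (hrne : r₁ ≠ r₂) (he₁ : e₁ ∈ E)
    (htr : ∀ w, covers t r₁ w ∨ covers t r₂ w → covers t e₁ w) : False := by
  classical
  set G := insert e₁ ((F.erase r₁).erase r₂) with hGdef
  have hsubF : (F.erase r₁).erase r₂ ⊆ F :=
    (Finset.erase_subset _ _).trans (Finset.erase_subset _ _)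
  have hGE : G ⊆ E := Finset.insert_subset he₁ (hsubF.trans hF.1)
  have hGcov : IsCover t G := by
    intro w hw
    obtain ⟨g, hg, hgc⟩ := hF.2.1.1 w hw
    by_cases h1 : g = r₁
    · subst h1; exact ⟨e₁, Finset.mem_insert_self _ _, htr w (Or.inl hgc)⟩
    · by_cases h2 : g = r₂
      · subst h2; exact ⟨e₁, Finset.mem_insert_self _ _, htr w (Or.inr hgc)⟩
      · exact ⟨g, Finset.mem_insert_of_mem (Finset.mem_erase.mpr ⟨h2,
          Finset.mem_erase.mpr ⟨h1, hg⟩⟩), hgc⟩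
  have h2F : 2 ≤ F.card := by
    have hsub : ({r₁, r₂} : Finset (Sym2 V)) ⊆ F := by
      intro g hg; rcases Finset.mem_insert.mp hg with rfl | hg
      · exact hr₁
      · rw [Finset.mem_singleton] at hg; subst hg; exact hr₂
    have := Finset.card_le_card hsub
    rwa [Finset.card_pair hrne] at this
  have herase2 : ((F.erase r₁).erase r₂).card = F.card - 2 := by
    rw [Finset.card_erase_of_mem (Finset.mem_erase.mpr ⟨fun h => hrne h.symm, hr₂⟩),
      Finset.card_erase_of_mem hr₁]
    omega
  have hle : G.card ≤ F.card - 1 := by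
    have := Finset.card_insert_le e₁ ((F.erase r₁).erase r₂)
    rw [hGdef]
    omega
  have hge : F.card ≤ G.card := hF.2.2.1 G hGE hGcov
  omega

/-! ### Shadows-minimality consequences -/

lemma private_edge {t : Tree V} {E F : Finset (Sym2 V)} (hF : IsGoodCover t E F)
    {e e' : Sym2 V} {w₀ : V} (heF : e ∈ F) (hPS : ProperShadow t e' e)
    (huniq : ∀ w, covers t e w → ¬ covers t e' w → w = w₀) :
    ∀ f ∈ F, f ≠ e → ¬ covers t f w₀ := by
  intro f hfF hfe hcov
  refine hF.2.1.2.2 e heF e' hPS (fun w hw => ?_)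
  obtain ⟨g, hg, hgc⟩ := hF.2.1.1 w hw
  by_cases hge : g = e
  · subst hge
    by_cases he' : covers t e' w
    · exact ⟨e', Finset.mem_insert_self _ _, he'⟩
    · have := huniq w hgc he'
      subst this
      exact ⟨f, Finset.mem_insert_of_mem (Finset.mem_erase.mpr ⟨hfe, hfF⟩), hcov⟩
  · exact ⟨g, Finset.mem_insert_of_mem (Finset.mem_erase.mpr ⟨hge, hg⟩), hgc⟩

lemma leaf_link_unique {t : Tree V} {E F : Finset (Sym2 V)} (hnd : ∀ e ∈ E, ¬ e.IsDiag)
    (hF : IsGoodCover t E F) {ℓ y y' : V} (hl : t.IsLeaf ℓ)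
    (h1 : s(ℓ, y) ∈ F) (h2 : s(ℓ, y') ∈ F) : y = y' := by
  by_contra hne
  have hyl : y ≠ ℓ := by
    intro h; subst h
    exact hnd _ (hF.1 h1) (Sym2.mk_isDiag_iff.mpr rfl)
  have hy'l : y' ≠ ℓ := by
    intro h; subst h
    exact hnd _ (hF.1 h2) (Sym2.mk_isDiag_iff.mpr rfl)
  have hnee : s(ℓ, y) ≠ s(ℓ, y') := by
    intro h
    rcases Sym2.eq_iff.mp h with ⟨_, h'⟩ | ⟨hl', h''⟩
    · exact hne h'
    · exact hyl h''
  have hcovy' : covers t s(ℓ, y') ℓ := covers_leaf_edge hl hy'l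
  have hdy : ¬ t.desc ℓ y := fun h => hyl (leaf_desc_eq hl h)
  by_cases hpar : y = t.parent ℓ
  · refine hF.2.1.2.1 _ h1 (fun w hw => ?_)
    obtain ⟨g, hg, hgc⟩ := hF.2.1.1 w hw
    by_cases hge : g = s(ℓ, y)
    · subst hge
      rw [hpar] at hgc
      have hwl := covers_parent_link hgc
      exact ⟨s(ℓ, y'), Finset.mem_erase.mpr ⟨hnee.symm, h2⟩, by rw [hwl]; exact hcovy'⟩
    · exact ⟨g, Finset.mem_erase.mpr ⟨hge, hg⟩, hgc⟩
  · have hPS : ProperShadow t s(t.parent ℓ, y) s(ℓ, y) := by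
      refine ⟨shadow_lift hdy, ℓ, covers_leaf_edge hl hyl, ?_⟩
      intro h
      rcases covers_iff.mp h with ⟨hh1, _⟩ | ⟨hh1, _⟩
      · exact hl.1 (eq_root_of_parent_eq (leaf_desc_eq hl hh1))
      · exact hyl (leaf_desc_eq hl hh1)
    refine hF.2.1.2.2 _ h1 _ hPS (fun w hw => ?_)
    obtain ⟨g, hg, hgc⟩ := hF.2.1.1 w hw
    by_cases hge : g = s(ℓ, y)
    · subst hge
      by_cases hwl : w = ℓ
      · exact ⟨s(ℓ, y'), Finset.mem_insert_of_mem (Finset.mem_erase.mpr ⟨hnee.symm, h2⟩),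
          by rw [hwl]; exact hcovy'⟩
      · refine ⟨s(t.parent ℓ, y), Finset.mem_insert_self _ _, ?_⟩
        rcases covers_iff.mp hgc with ⟨hh1, hh2⟩ | ⟨hh1, hh2⟩
        · exact covers_mk (desc_parent_shift hh1 hwl) hh2
        · exact covers_iff.mpr (Or.inr ⟨hh1, fun hp => hh2 (desc_step_down hp)⟩)
    · exact ⟨g, Finset.mem_insert_of_mem (Finset.mem_erase.mpr ⟨hge, hg⟩), hgc⟩

lemma leaf_link_exists {t : Tree V} {E F : Finset (Sym2 V)} (hF : IsGoodCover t E F)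
    {ℓ : V} (hl : t.IsLeaf ℓ) : ∃ y, s(ℓ, y) ∈ F ∧ ¬ t.desc ℓ y := by
  obtain ⟨g, hg, hgc⟩ := hF.2.1.1 ℓ hl.1
  obtain ⟨y, hgy, hy⟩ := covers_leaf_end hl hgc
  exact ⟨y, hgy ▸ hg, hy⟩

/-- if `a` is a locked leaf with locking link `bb'` and locking tree `T_v`,
and `ax ∈ F` with `x ∉ {b, b'}`, then `x` is a proper ancestor of the least common ancestor
`u` of `a, b, b'`, the link `bb'` lies in `F`, and there is a link `xz ∈ F` with `z ∉ T_v`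
and `z` not a locked leaf. -/
theorem locked_leaf_cover_structure (t : Tree V) (E F : Finset (Sym2 V))
    (hnd : ∀ e ∈ E, ¬ e.IsDiag) (hsh : ShadowClosed t E) (hF : IsGoodCover t E F)
    (a b b' v x : V) (hlock : IsLockingTree t E a b b' v)
    (haxF : s(a, x) ∈ F) (hxb : x ≠ b) (hxb' : x ≠ b') :
    ∃ u : V, t.desc u a ∧ t.desc u b ∧ t.desc u b' ∧
      (∀ w, t.desc w a → t.desc w b → t.desc w b' → t.desc w u) ∧
      t.desc x u ∧ x ≠ u ∧ s(b, b') ∈ F ∧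
      ∃ z : V, s(x, z) ∈ F ∧ ¬ t.desc v z ∧ ¬ IsLockedLeaf t E z := by
  classical
  obtain ⟨⟨hvroot, hbb'E, hbne, hb'a, hset, htwin, habE, hclosed⟩, hmin⟩ := hlock
  have hmem : ∀ z : V, (t.IsLeaf z ∧ t.desc v z) ↔ (z = a ∨ z = b ∨ z = b') := by
    intro z
    have := Set.ext_iff.mp hset z
    simpa using this
  have hla : t.IsLeaf a := ((hmem a).mpr (Or.inl rfl)).1
  have hva : t.desc v a := ((hmem a).mpr (Or.inl rfl)).2
  have hlb : t.IsLeaf b := ((hmem b).mpr (Or.inr (Or.inl rfl))).1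
  have hvb : t.desc v b := ((hmem b).mpr (Or.inr (Or.inl rfl))).2
  have hlb' : t.IsLeaf b' := ((hmem b').mpr (Or.inr (Or.inr rfl))).1
  have hvb' : t.desc v b' := ((hmem b').mpr (Or.inr (Or.inr rfl))).2
  have hab : a ≠ b := htwin.2.2.1
  have hab' : a ≠ b' := fun h => hb'a h.symm
  have hxa : x ≠ a := by
    intro h
    subst h
    exact hnd _ (hF.1 haxF) (Sym2.mk_isDiag_iff.mpr rfl)
  obtain ⟨sS, hsa, hsb, hslca⟩ := exists_lca (t := t) a b
  obtain ⟨u, hus, hub', hulca'⟩ := exists_lca (t := t) sS b'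
  have hua : t.desc u a := desc_trans hus hsa
  have hub : t.desc u b := desc_trans hus hsb
  have hulca : ∀ w, t.desc w a → t.desc w b → t.desc w b' → t.desc w u :=
    fun w h1 h2 h3 => hulca' w (hslca w h1 h2) h3
  have hvs : t.desc v sS := hslca v hva hvb
  have hvu : t.desc v u := hulca' v hvs hvb'
  have hTv : ∀ z, t.desc v z → t.desc z a ∨ t.desc z b ∨ t.desc z b' := by
    intro z hz
    have hzroot : z ≠ t.root := by
      rintro rfl
      exact hvroot (desc_root_eq hz)
    obtain ⟨l, hlleaf, hzl⟩ := exists_leaf_below hzroot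
    have hvl : t.desc v l := desc_trans hz hzl
    rcases (hmem l).mp ⟨hlleaf, hvl⟩ with rfl | rfl | rfl
    exacts [Or.inl hzl, Or.inr (Or.inl hzl), Or.inr (Or.inr hzl)]
  have hs_ne_a : sS ≠ a := by
    rintro rfl
    exact hab (leaf_desc_eq hla hsb).symm
  have hTs : ∀ z, t.desc sS z → t.desc z a ∨ t.desc z b := twin_subtree htwin hsa hsb hslca
  -- up node of a
  have hupex : ∃ u0, IsUpLink t E a u0 := by
    have hne : (Finset.univ.filter (fun y => s(a, y) ∈ E)).Nonempty := ⟨b, by simp [habE]⟩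
    obtain ⟨u0, hu0, hmin0⟩ := Finset.exists_min_image _ (t.depth) hne
    exact ⟨u0, (Finset.mem_filter.mp hu0).2, fun y hy => hmin0 y (by simp [hy])⟩
  obtain ⟨u0, hu0⟩ := hupex
  have hvu0 : t.desc v u0 := hclosed u0 hu0
  have hdepth : ∀ y, s(a, y) ∈ E → t.depth v ≤ t.depth y :=
    fun y hy => le_trans (desc_depth_le hvu0) (hu0.2 y hy)
  -- x lies in the subtree of v
  have hvx : t.desc v x := by
    by_contra hnvx
    obtain ⟨h, hha, hhx, hhlca⟩ := exists_lca (t := t) a x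
    have hhv : t.desc h v ∧ h ≠ v := by
      rcases desc_comparable hha hva with h1 | h1
      · refine ⟨h1, ?_⟩
        rintro rfl
        exact hnvx hhx
      · exact absurd (desc_trans h1 hhx) hnvx
    have hahE : s(a, h) ∈ E := by
      refine hsh _ (hF.1 haxF) _ ?_ (shadow_lca hhx hhlca)
      rw [Sym2.mk_isDiag_iff]
      rintro rfl
      exact hxa (leaf_desc_eq hla hhx)
    have hd1 := hdepth h hahE
    have hd2 := desc_depth_lt hhv.1 hhv.2
    omega
  -- unique links at the leaves
  have huax : ∀ y, s(a, y) ∈ F → y = x := fun y hy => leaf_link_unique hnd hF hla hy haxF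
  obtain ⟨yb, hybF, hybd⟩ := leaf_link_exists hF hlb
  have hyb_ne_b : yb ≠ b := by
    rintro rfl
    exact hybd (desc_refl yb)
  have hyb_ne_a : yb ≠ a := by
    intro h
    have habmem : s(a, b) ∈ F := by
      rw [show s(a, b) = s(b, a) from Sym2.eq_swap, ← h]
      exact hybF
    exact hxb (huax b habmem).symm
  have hax_ne_byb : s(a, x) ≠ s(b, yb) := by
    intro h
    rcases Sym2.eq_iff.mp h with ⟨h1, _⟩ | ⟨h1, _⟩
    · exact hab h1
    · exact hyb_ne_a h1.symm
  have habnF : s(a, b) ∉ F := fun h => hxb (huax b h).symm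
  have htwab : IsTwinLinkE t s(a, b) := is_twin_link htwin
  have htwax : ¬ IsTwinLinkE t s(a, x) := not_twinlink_pair htwin hxa hxb
  have htwbyb : ¬ IsTwinLinkE t s(b, yb) :=
    not_twinlink_pair (twin_pair_symm htwin) hyb_ne_b hyb_ne_a
  -- MAIN POSITION CLAIM: x is a proper ancestor of u
  have hpos : t.desc x u ∧ x ≠ u := by
    by_contra hgoal
    -- Step 1 : x is not in the subtree of the stem
    have hnotTs : ¬ t.desc sS x := by
      intro hxs
      have htr1 : ∀ w, covers t s(a, x) w → covers t s(a, b) w := by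
        intro w hw
        rcases covers_iff.mp hw with ⟨h1, h2⟩ | ⟨h1, h2⟩
        · exact covers_mk h1 (fun hwb => h2 (desc_trans (hslca w h1 hwb) hxs))
        · rcases hTs x hxs with hxa' | hxb''
          · exact absurd (desc_trans h1 hxa') h2
          · exact covers_iff.mpr (Or.inr ⟨desc_trans h1 hxb'', h2⟩)
      by_cases hybs : t.desc sS yb
      · refine shrink2 hF haxF hybF hax_ne_byb habE (fun w hw => ?_)
        rcases hw with hw | hw
        · exact htr1 w hw
        · rcases covers_iff.mp hw with ⟨h1, h2⟩ | ⟨h1, h2⟩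
          · refine covers_iff.mpr (Or.inr ⟨h1, fun hwa => ?_⟩)
            exact h2 (desc_trans (hslca w hwa h1) hybs)
          · rcases hTs yb hybs with hy | hy
            · exact covers_mk (desc_trans h1 hy) h2
            · exact absurd (desc_trans h1 hy) h2
      · have hsybE : s(sS, yb) ∈ E := by
          refine hsh _ (hF.1 hybF) _ ?_ (shadow_over_top hsb hybs)
          rw [Sym2.mk_isDiag_iff]
          rintro rfl
          exact hybs (desc_refl sS)
        refine exchange2 hnd hsh hF haxF hybF hax_ne_byb habE hsybE (fun w hw => ?_)
          htwax htwbyb htwab habnF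
        rcases hw with hw | hw
        · exact Or.inl (htr1 w hw)
        · rcases covers_iff.mp hw with ⟨h1, h2⟩ | ⟨h1, h2⟩
          · by_cases hwa : t.desc w a
            · exact Or.inr (covers_mk (hslca w hwa h1) h2)
            · exact Or.inl (covers_iff.mpr (Or.inr ⟨h1, hwa⟩))
          · exact Or.inr (covers_iff.mpr
              (Or.inr ⟨h1, fun hws => h2 (desc_trans hws hsb)⟩))
    by_cases hdxab : t.desc x a ∨ t.desc x b
    · -- CASE (a) : x is a proper ancestor of the stem but not of u
      have hxs : t.desc x sS := by
        rcases hdxab with h | h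
        · exact (desc_comparable h hsa).resolve_right hnotTs
        · exact (desc_comparable h hsb).resolve_right hnotTs
      have hxnes : x ≠ sS := by
        rintro rfl
        exact hnotTs (desc_refl x)
      have hux : t.desc u x := by
        rcases desc_comparable hxs hus with h | h
        · by_cases hxe : x = u
          · rw [hxe]; exact desc_refl u
          · exact absurd ⟨h, hxe⟩ hgoal
        · exact h
      have hsxE : s(sS, x) ∈ E := by
        refine hsh _ (hF.1 haxF) _ ?_ (shadow_vertical hsa hxs hxnes.symm)
        rw [Sym2.mk_isDiag_iff]
        exact fun h => hxnes h.symm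
      by_cases hybs : t.desc sS yb
      · -- (a-I)
        refine exchange2 hnd hsh hF haxF hybF hax_ne_byb habE hsxE (fun w hw => ?_)
          htwax htwbyb htwab habnF
        rcases hw with hw | hw
        · rcases covers_iff.mp hw with ⟨h1, h2⟩ | ⟨h1, h2⟩
          · by_cases hwb : t.desc w b
            · exact Or.inr (covers_mk (hslca w h1 hwb) h2)
            · exact Or.inl (covers_mk h1 hwb)
          · exact absurd (desc_trans (desc_trans h1 hxs) hsa) h2
        · rcases covers_iff.mp hw with ⟨h1, h2⟩ | ⟨h1, h2⟩
          · by_cases hwa : t.desc w a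
            · exact absurd (desc_trans (hslca w hwa h1) hybs) h2
            · exact Or.inl (covers_iff.mpr (Or.inr ⟨h1, hwa⟩))
          · rcases hTs yb hybs with hy | hy
            · exact Or.inl (covers_mk (desc_trans h1 hy) h2)
            · exact absurd (desc_trans h1 hy) h2
      · by_cases hxyb : t.desc x yb
        · by_cases hybs' : t.desc yb sS
          · -- (a-IIIa)
            refine exchange2 hnd hsh hF haxF hybF hax_ne_byb habE hsxE (fun w hw => ?_)
              htwax htwbyb htwab habnF
            rcases hw with hw | hw
            · rcases covers_iff.mp hw with ⟨h1, h2⟩ | ⟨h1, h2⟩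
              · by_cases hwb : t.desc w b
                · exact Or.inr (covers_mk (hslca w h1 hwb) h2)
                · exact Or.inl (covers_mk h1 hwb)
              · exact absurd (desc_trans (desc_trans h1 hxs) hsa) h2
            · rcases covers_iff.mp hw with ⟨h1, h2⟩ | ⟨h1, h2⟩
              · by_cases hwa : t.desc w a
                · refine Or.inr (covers_mk (hslca w hwa h1) (fun hwx => ?_))
                  exact h2 (desc_trans hwx hxyb)
                · exact Or.inl (covers_iff.mpr (Or.inr ⟨h1, hwa⟩))
              · exact absurd (desc_trans (desc_trans h1 hybs') hsb) h2
          · -- (a-IIIb) : here x = u and yb is an ancestor of b'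
            have hybv : t.desc v yb := desc_trans hvx hxyb
            have hybb' : t.desc yb b' := by
              rcases hTv yb hybv with h | h | h
              · exact absurd ((desc_comparable h hsa).resolve_left hybs') hybs
              · exact absurd ((desc_comparable h hsb).resolve_left hybs') hybs
              · exact h
            have hxu : t.desc x u :=
              hulca x (desc_trans hxs hsa) (desc_trans hxs hsb) (desc_trans hxyb hybb')
            have hxequ : x = u := desc_antisymm hxu hux
            have hsybE : s(sS, yb) ∈ E := by
              refine hsh _ (hF.1 hybF) _ ?_ (shadow_over_top hsb hybs)
              rw [Sym2.mk_isDiag_iff]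
              rintro rfl
              exact hybs (desc_refl sS)
            refine exchange2 hnd hsh hF haxF hybF hax_ne_byb habE hsybE (fun w hw => ?_)
              htwax htwbyb htwab habnF
            rcases hw with hw | hw
            · rcases covers_iff.mp hw with ⟨h1, h2⟩ | ⟨h1, h2⟩
              · by_cases hwb : t.desc w b
                · refine Or.inr (covers_mk (hslca w h1 hwb) (fun hwyb => ?_))
                  have hwu : t.desc w u := hulca w h1 hwb (desc_trans hwyb hybb')
                  rw [← hxequ] at hwu
                  exact h2 hwu
                · exact Or.inl (covers_mk h1 hwb)
              · exact absurd (desc_trans (desc_trans h1 hxs) hsa) h2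
            · rcases covers_iff.mp hw with ⟨h1, h2⟩ | ⟨h1, h2⟩
              · by_cases hwa : t.desc w a
                · exact Or.inr (covers_mk (hslca w hwa h1) h2)
                · exact Or.inl (covers_iff.mpr (Or.inr ⟨h1, hwa⟩))
              · exact Or.inr (covers_iff.mpr
                  (Or.inr ⟨h1, fun hws => h2 (desc_trans hws hsb)⟩))
        · -- (a-II)
          have hsybE : s(sS, yb) ∈ E := by
            refine hsh _ (hF.1 hybF) _ ?_ (shadow_over_top hsb hybs)
            rw [Sym2.mk_isDiag_iff]
            rintro rfl
            exact hybs (desc_refl sS)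
          refine exchange2 hnd hsh hF haxF hybF hax_ne_byb habE hsybE (fun w hw => ?_)
            htwax htwbyb htwab habnF
          rcases hw with hw | hw
          · rcases covers_iff.mp hw with ⟨h1, h2⟩ | ⟨h1, h2⟩
            · by_cases hwb : t.desc w b
              · have hws := hslca w h1 hwb
                refine Or.inr (covers_mk hws (fun hwyb => ?_))
                rcases desc_comparable hws hxs with h | h
                · exact h2 h
                · exact hxyb (desc_trans h hwyb)
              · exact Or.inl (covers_mk h1 hwb)
            · exact absurd (desc_trans (desc_trans h1 hxs) hsa) h2
          · rcases covers_iff.mp hw with ⟨h1, h2⟩ | ⟨h1, h2⟩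
            · by_cases hwa : t.desc w a
              · exact Or.inr (covers_mk (hslca w hwa h1) h2)
              · exact Or.inl (covers_iff.mpr (Or.inr ⟨h1, hwa⟩))
            · exact Or.inr (covers_iff.mpr
                (Or.inr ⟨h1, fun hws => h2 (desc_trans hws hsb)⟩))
    · -- CASE (b) : x lies strictly between u and b'
      push_neg at hdxab
      obtain ⟨hdxa, hdxb⟩ := hdxab
      have hxib' : t.desc x b' := by
        rcases hTv x hvx with h | h | h
        exacts [absurd h hdxa, absurd h hdxb, h]
      have hux : t.desc u x := by
        rcases desc_comparable hxib' hub' with h | h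
        · exact absurd (desc_trans (desc_trans h hus) hsa) hdxa
        · exact h
      have hxroot : x ≠ t.root := by
        rintro rfl
        exact hvroot (desc_root_eq hvx)
      have hxaF : s(x, a) ∈ F := by
        rw [show s(x, a) = s(a, x) from Sym2.eq_swap]
        exact haxF
      obtain ⟨y', hy'F, hy'd⟩ := leaf_link_exists hF hlb'
      have hy'b' : y' ≠ b' := by
        rintro rfl
        exact hy'd (desc_refl y')
      -- privacy of the edge above x
      have hPSx : ProperShadow t s(t.parent x, a) s(x, a) := by
        refine ⟨shadow_lift hdxa, x, covers_mk (desc_refl x) hdxa, ?_⟩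
        intro h
        rcases covers_iff.mp h with ⟨h1, _⟩ | ⟨h1, _⟩
        · have hxp := desc_antisymm h1 (desc_of_parent rfl)
          exact hxroot (eq_root_of_parent_eq hxp.symm)
        · exact hdxa h1
      have hprivb : ∀ f ∈ F, f ≠ s(x, a) → ¬ covers t f x := by
        refine private_edge hF hxaF hPSx (fun w hw hnc => ?_)
        rcases covers_iff.mp hw with ⟨h1, h2⟩ | ⟨h1, h2⟩
        · by_cases hwx : w = x
          · exact hwx
          · exact absurd (covers_mk (desc_parent_shift h1 hwx) h2) hnc
        · exact absurd (covers_iff.mpr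
            (Or.inr ⟨h1, fun hp => h2 (desc_step_down hp)⟩)) hnc
      have hby'ne : s(b', y') ≠ s(x, a) := by
        intro h
        rcases Sym2.eq_iff.mp h with ⟨h1, _⟩ | ⟨h1, h2⟩
        · exact hxb' h1.symm
        · exact hab' h1.symm
      have hxy' : t.desc x y' := by
        by_contra hnxy'
        exact hprivb _ hy'F hby'ne (covers_mk hxib' hnxy')
      have hTx : ∀ z, t.desc x z → t.desc z b' := by
        intro z hz
        rcases hTv z (desc_trans hvx hz) with h | h | h
        · exact absurd (desc_trans hz h) hdxa
        · exact absurd (desc_trans hz h) hdxb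
        · exact h
      have hy'notleaf : ¬ t.IsLeaf y' := not_leaf_of_desc_ne (hTx y' hxy') hy'b'
      have htwby' : ¬ IsTwinLinkE t s(b', y') := by
        rw [show s(b', y') = s(y', b') from Sym2.eq_swap]
        exact not_twinlink_not_leaf hy'notleaf
      have hax_ne_by' : s(a, x) ≠ s(b', y') := by
        intro h
        rcases Sym2.eq_iff.mp h with ⟨h1, _⟩ | ⟨h1, _⟩
        · exact hab' h1
        · exact hdxa (h1 ▸ hxy') |>.elim
      refine exchange2 hnd hsh hF haxF hy'F hax_ne_by' habE hbb'E (fun w hw => ?_)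
        htwax htwby' htwab habnF
      rcases hw with hw | hw
      · rcases covers_iff.mp hw with ⟨h1, h2⟩ | ⟨h1, h2⟩
        · by_cases hwb : t.desc w b
          · refine Or.inr (covers_mk hwb (fun hwb' => ?_))
            exact h2 (desc_trans (hulca w h1 hwb hwb') hux)
          · exact Or.inl (covers_mk h1 hwb)
        · refine Or.inr (covers_iff.mpr (Or.inr ⟨desc_trans h1 hxib', ?_⟩))
          intro hwb
          rcases desc_comparable hwb hsb with h | h
          · exact h2 (desc_trans h hsa)
          · rcases hTs x (desc_trans h h1) with h' | h'
            · exact hdxa h'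
            · exact hdxb h'
      · rcases covers_iff.mp hw with ⟨h1, h2⟩ | ⟨h1, h2⟩
        · by_cases hwb : t.desc w b
          · exfalso
            have hws : t.desc w sS := by
              rcases desc_comparable hwb hsb with h | h
              · exact h
              · rcases hTs b' (desc_trans h h1) with h' | h'
                · exact absurd (leaf_desc_eq hlb' h') hab'
                · exact absurd (leaf_desc_eq hlb' h') hbne
            have hwu : t.desc w u := hulca w (desc_trans hws hsa) hwb h1
            exact h2 (desc_trans (desc_trans hwu hux) hxy')
          · exact Or.inr (covers_iff.mpr (Or.inr ⟨h1, hwb⟩))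
        · exact absurd (desc_trans h1 (hTx y' hxy')) h2
  obtain ⟨hxu, hxneu⟩ := hpos
  have hxs : t.desc x sS := desc_trans hxu hus
  have hxda : t.desc x a := desc_trans hxu hua
  have hxdb : t.desc x b := desc_trans hxu hub
  have hxdb' : t.desc x b' := desc_trans hxu hub'
  have hxroot : x ≠ t.root := by
    rintro rfl
    exact hvroot (desc_root_eq hvx)
  have hxnes : x ≠ sS := by
    intro h
    rw [h] at hxu
    exact hxneu (h.trans (desc_antisymm hxu hus))
  have hsxE : s(sS, x) ∈ E := by
    refine hsh _ (hF.1 haxF) _ ?_ (shadow_vertical hsa hxs hxnes.symm)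
    rw [Sym2.mk_isDiag_iff]
    exact fun h => hxnes h.symm
  have hvneu : v ≠ u := by
    intro h
    have hxv : t.desc x v := by rw [h]; exact hxu
    exact hxneu ((desc_antisymm hxv hvx).trans h)
  -- Step 5 : the up-node of a is exactly v, so s(a,v) ∈ E
  obtain ⟨cv, hcvp, hcvne, hcvu⟩ := child_exists hvu hvneu
  have hcvroot : cv ≠ t.root := by
    rintro rfl
    exact hvroot (desc_root_eq (desc_of_parent hcvp))
  have hnotlock : ¬ LocksAt t E b b' a cv := by
    intro hL
    have h1 := hmin cv hL
    exact hcvne (desc_antisymm h1 (desc_of_parent hcvp))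
  have hsetcv : {z | t.IsLeaf z ∧ t.desc cv z} = ({a, b, b'} : Set V) := by
    apply Set.ext
    intro z
    simp only [Set.mem_setOf_eq, Set.mem_insert_iff, Set.mem_singleton_iff]
    constructor
    · rintro ⟨h1, h2⟩
      exact (hmem z).mp ⟨h1, desc_trans (desc_of_parent hcvp) h2⟩
    · rintro (rfl | rfl | rfl)
      exacts [⟨hla, desc_trans hcvu hua⟩, ⟨hlb, desc_trans hcvu hub⟩,
        ⟨hlb', desc_trans hcvu hub'⟩]
  have hnotclosed : ¬ AClosed t E cv a := by
    intro hc
    exact hnotlock ⟨hcvroot, hbb'E, hbne, hb'a, hsetcv, htwin, habE, hc⟩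
  rw [AClosed] at hnotclosed
  push_neg at hnotclosed
  obtain ⟨u', hu', hncv⟩ := hnotclosed
  have hvu' : t.desc v u' := hclosed u' hu'
  have hu'v : u' = v := by
    by_contra hne
    obtain ⟨c', hc'p, hc'ne, hc'u'⟩ := child_exists hvu' (Ne.symm hne)
    have hc'root : c' ≠ t.root := by
      rintro rfl
      exact hvroot (desc_root_eq (desc_of_parent hc'p))
    obtain ⟨l, hl, hc'l⟩ := exists_leaf_below hc'root
    have hvl : t.desc v l := desc_trans (desc_of_parent hc'p) hc'l
    have hcvl : t.desc cv l := by
      rcases (hmem l).mp ⟨hl, hvl⟩ with rfl | rfl | rfl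
      exacts [desc_trans hcvu hua, desc_trans hcvu hub, desc_trans hcvu hub']
    have hceq := children_disjoint hc'p hcvp hc'ne hcvne hc'l hcvl
    rw [hceq] at hc'u'
    exact hncv hc'u'
  have havE : s(a, v) ∈ E := by
    rw [← hu'v]
    exact hu'.1
  -- the child of x towards u, and privacy of the edge (c_x, x)
  obtain ⟨cx, hcxp, hcxne, hcxu⟩ := child_exists hxu hxneu
  have hcxa : t.desc cx a := desc_trans hcxu hua
  have hcxb : t.desc cx b := desc_trans hcxu hub
  have hcxb' : t.desc cx b' := desc_trans hcxu hub'
  have hcxnea : cx ≠ a := by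
    intro h
    rw [h] at hcxu
    have hua' := leaf_desc_eq hla hcxu
    rw [hua'] at hub
    exact hab (leaf_desc_eq hla hub).symm
  have hcovaxcx : covers t s(a, x) cx :=
    covers_mk hcxa (fun h => hcxne (desc_antisymm h (desc_of_parent hcxp)))
  have hPScx : ProperShadow t s(a, cx) s(a, x) := by
    refine ⟨shadow_shrink_top hcxp hcxa hcxne, cx, hcovaxcx, ?_⟩
    intro h
    rcases covers_iff.mp h with ⟨h1, h2⟩ | ⟨h1, h2⟩
    · exact h2 (desc_refl cx)
    · exact h2 hcxa
  have hprivcx : ∀ f ∈ F, f ≠ s(a, x) → ¬ covers t f cx := by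
    refine private_edge hF haxF hPScx (fun w hw hnc => ?_)
    rcases covers_iff.mp hw with ⟨h1, h2⟩ | ⟨h1, h2⟩
    · by_cases hwe : w = cx
      · exact hwe
      · refine absurd (covers_mk h1 (fun hwcx' => ?_)) hnc
        exact h2 (hcxp ▸ desc_parent_shift hwcx' hwe)
    · exact absurd (desc_trans h1 hxda) h2
  -- PART (ii) : the locking link is in F
  have hbb'F : s(b, b') ∈ F := by
    by_cases hyb' : yb = b'
    · rw [← hyb']
      exact hybF
    · exfalso
      by_cases hybs : t.desc sS yb
      · -- (ii-1)
        refine exchange2 hnd hsh hF haxF hybF hax_ne_byb habE hsxE (fun w hw => ?_)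
          htwax htwbyb htwab habnF
        rcases hw with hw | hw
        · rcases covers_iff.mp hw with ⟨h1, h2⟩ | ⟨h1, h2⟩
          · by_cases hwb : t.desc w b
            · exact Or.inr (covers_mk (hslca w h1 hwb) h2)
            · exact Or.inl (covers_mk h1 hwb)
          · exact absurd (desc_trans h1 hxda) h2
        · rcases covers_iff.mp hw with ⟨h1, h2⟩ | ⟨h1, h2⟩
          · by_cases hwa : t.desc w a
            · exact absurd (desc_trans (hslca w hwa h1) hybs) h2
            · exact Or.inl (covers_iff.mpr (Or.inr ⟨h1, hwa⟩))
          · rcases hTs yb hybs with hy | hy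
            · exact Or.inl (covers_mk (desc_trans h1 hy) h2)
            · exact absurd (desc_trans h1 hy) h2
      · by_cases hxyb : t.desc x yb
        · by_cases hybs' : t.desc yb sS
          · -- (ii-2a)
            refine exchange2 hnd hsh hF haxF hybF hax_ne_byb habE hsxE (fun w hw => ?_)
              htwax htwbyb htwab habnF
            rcases hw with hw | hw
            · rcases covers_iff.mp hw with ⟨h1, h2⟩ | ⟨h1, h2⟩
              · by_cases hwb : t.desc w b
                · exact Or.inr (covers_mk (hslca w h1 hwb) h2)
                · exact Or.inl (covers_mk h1 hwb)
              · exact absurd (desc_trans h1 hxda) h2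
            · rcases covers_iff.mp hw with ⟨h1, h2⟩ | ⟨h1, h2⟩
              · by_cases hwa : t.desc w a
                · refine Or.inr (covers_mk (hslca w hwa h1) (fun hwx => ?_))
                  exact h2 (desc_trans hwx hxyb)
                · exact Or.inl (covers_iff.mpr (Or.inr ⟨h1, hwa⟩))
              · exact absurd (desc_trans (desc_trans h1 hybs') hsb) h2
          · -- (ii-2b) : the three-for-three exchange
            have hybv : t.desc v yb := desc_trans hvx hxyb
            have hybb' : t.desc yb b' := by
              rcases hTv yb hybv with h | h | h
              · exact absurd ((desc_comparable h hsa).resolve_left hybs') hybs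
              · exact absurd ((desc_comparable h hsb).resolve_left hybs') hybs
              · exact h
            have huyb : t.desc u yb := by
              rcases desc_comparable hybb' hub' with h | h
              · exact absurd (desc_trans h hus) hybs'
              · exact h
            obtain ⟨y', hy'F, hy'd⟩ := leaf_link_exists hF hlb'
            have hy'b' : y' ≠ b' := by
              rintro rfl
              exact hy'd (desc_refl y')
            have hby'ne : s(b', y') ≠ s(a, x) := by
              intro h
              rcases Sym2.eq_iff.mp h with ⟨h1, _⟩ | ⟨h1, _⟩
              · exact hab' h1.symm
              · exact hxb' h1.symm
            have hcxy' : t.desc cx y' := by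
              by_contra hncx
              exact hprivcx _ hy'F hby'ne (covers_mk hcxb' hncx)
            have hy'ne_b : y' ≠ b := by
              intro h
              have : s(b, b') ∈ F := by
                rw [show s(b, b') = s(b', b) from Sym2.eq_swap, ← h]
                exact hy'F
              exact hyb' ((leaf_link_unique hnd hF hlb this hybF).symm ▸ rfl)
            have hy'ne_a : y' ≠ a := by
              intro h
              have : s(a, b') ∈ F := by
                rw [show s(a, b') = s(b', a) from Sym2.eq_swap, ← h]
                exact hy'F
              exact hxb' (huax b' this).symm
            have hvy' : t.desc v y' :=
              desc_trans hvx (desc_trans (desc_of_parent hcxp) hcxy')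
            have hy'cases := hTv y' hvy'
            have hy'notleaf : ¬ t.IsLeaf y' := by
              rcases hy'cases with h | h | h
              · exact not_leaf_of_desc_ne h (fun hh => hy'ne_a hh)
              · exact not_leaf_of_desc_ne h (fun hh => hy'ne_b hh)
              · exact not_leaf_of_desc_ne h (fun hh => hy'b' hh)
            have htwby' : ¬ IsTwinLinkE t s(b', y') := by
              rw [show s(b', y') = s(y', b') from Sym2.eq_swap]
              exact not_twinlink_not_leaf hy'notleaf
            have hax_ne_by' : s(a, x) ≠ s(b', y') := fun h => hby'ne h.symm
            have hbyb_ne_by' : s(b, yb) ≠ s(b', y') := by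
              intro h
              rcases Sym2.eq_iff.mp h with ⟨h1, _⟩ | ⟨h1, _⟩
              · exact hbne h1
              · exact hy'ne_b h1.symm
            have hwsfact : ∀ w, t.desc w b → t.desc w b' → t.desc w sS := by
              intro w h1 h2
              rcases desc_comparable h1 hsb with h | h
              · exact h
              · rcases hTs b' (desc_trans h h2) with h' | h'
                · exact absurd (leaf_desc_eq hlb' h') hab'
                · exact absurd (leaf_desc_eq hlb' h') hbne
            refine exchange3 hnd hsh hF haxF hybF hy'F hax_ne_byb hax_ne_by' hbyb_ne_by'
              habE hbb'E hsxE (fun w hw => ?_) htwax htwbyb htwby' htwab habnF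
            rcases hw with hw | hw | hw
            · rcases covers_iff.mp hw with ⟨h1, h2⟩ | ⟨h1, h2⟩
              · by_cases hwb : t.desc w b
                · exact Or.inr (Or.inr (covers_mk (hslca w h1 hwb) h2))
                · exact Or.inl (covers_mk h1 hwb)
              · exact absurd (desc_trans h1 hxda) h2
            · rcases covers_iff.mp hw with ⟨h1, h2⟩ | ⟨h1, h2⟩
              · by_cases hwb' : t.desc w b'
                · exfalso
                  have hws := hwsfact w h1 hwb'
                  have hwu := hulca w (desc_trans hws hsa) h1 hwb'
                  exact h2 (desc_trans hwu huyb)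
                · exact Or.inr (Or.inl (covers_mk h1 hwb'))
              · exact Or.inr (Or.inl (covers_iff.mpr
                  (Or.inr ⟨desc_trans h1 hybb', h2⟩)))
            · rcases covers_iff.mp hw with ⟨h1, h2⟩ | ⟨h1, h2⟩
              · by_cases hwb : t.desc w b
                · have hws := hwsfact w hwb h1
                  have hwu := hulca w (desc_trans hws hsa) hwb h1
                  rcases desc_comparable hwu hcxu with hh | hh
                  · exact absurd (desc_trans hh hcxy') h2
                  · refine Or.inr (Or.inr (covers_mk hws (fun hwx => ?_)))
                    exact hcxne (desc_antisymm (desc_trans hh hwx) (desc_of_parent hcxp))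
                · exact Or.inr (Or.inl (covers_iff.mpr (Or.inr ⟨h1, hwb⟩)))
              · rcases hy'cases with h | h | h
                · have hwa := desc_trans h1 h
                  by_cases hwb : t.desc w b
                  · have hws := hslca w hwa hwb
                    by_cases hwx : t.desc w x
                    · exact absurd (desc_trans hwx hxdb') h2
                    · exact Or.inr (Or.inr (covers_mk hws hwx))
                  · exact Or.inl (covers_mk hwa hwb)
                · have hwb := desc_trans h1 h
                  by_cases hwa : t.desc w a
                  · have hws := hslca w hwa hwb
                    by_cases hwx : t.desc w x
                    · exact absurd (desc_trans hwx hxdb') h2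
                    · exact Or.inr (Or.inr (covers_mk hws hwx))
                  · exact Or.inl (covers_iff.mpr (Or.inr ⟨hwb, hwa⟩))
                · exact absurd (desc_trans h1 h) h2
        · -- (ii-3)
          have hsybE : s(sS, yb) ∈ E := by
            refine hsh _ (hF.1 hybF) _ ?_ (shadow_over_top hsb hybs)
            rw [Sym2.mk_isDiag_iff]
            rintro rfl
            exact hybs (desc_refl sS)
          refine exchange2 hnd hsh hF haxF hybF hax_ne_byb habE hsybE (fun w hw => ?_)
            htwax htwbyb htwab habnF
          rcases hw with hw | hw
          · rcases covers_iff.mp hw with ⟨h1, h2⟩ | ⟨h1, h2⟩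
            · by_cases hwb : t.desc w b
              · have hws := hslca w h1 hwb
                refine Or.inr (covers_mk hws (fun hwyb => ?_))
                rcases desc_comparable hws hxs with h | h
                · exact h2 h
                · exact hxyb (desc_trans h hwyb)
              · exact Or.inl (covers_mk h1 hwb)
            · exact absurd (desc_trans h1 hxda) h2
          · rcases covers_iff.mp hw with ⟨h1, h2⟩ | ⟨h1, h2⟩
            · by_cases hwa : t.desc w a
              · exact Or.inr (covers_mk (hslca w hwa h1) h2)
              · exact Or.inl (covers_iff.mpr (Or.inr ⟨h1, hwa⟩))
            · exact Or.inr (covers_iff.mpr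
                (Or.inr ⟨h1, fun hws => h2 (desc_trans hws hsb)⟩))
  -- PART (iii) : the link leaving T_v from x
  obtain ⟨g, hg, hgc⟩ := hF.2.1.1 x hxroot
  obtain ⟨p, q, hgpq, hdxp, hndxq⟩ := covers_rep hgc
  have hpx : p = x := by
    by_contra hne
    obtain ⟨c', hc'p, hc'ne, hc'pdesc⟩ := child_exists hdxp (Ne.symm hne)
    have hc'root : c' ≠ t.root := by
      rintro rfl
      exact hvroot (desc_root_eq (desc_trans hvx (desc_of_parent hc'p)))
    obtain ⟨l, hl, hc'l⟩ := exists_leaf_below hc'root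
    have hvl : t.desc v l := desc_trans hvx (desc_trans (desc_of_parent hc'p) hc'l)
    have hcxl : t.desc cx l := by
      rcases (hmem l).mp ⟨hl, hvl⟩ with rfl | rfl | rfl
      exacts [hcxa, hcxb, hcxb']
    have hceq := children_disjoint hc'p hcxp hc'ne hcxne hc'l hcxl
    rw [hceq] at hc'pdesc
    have hcovg : covers t g cx := by
      rw [hgpq]
      exact covers_mk hc'pdesc (fun h => hndxq (desc_trans (desc_of_parent hcxp) h))
    by_cases hgne : g = s(a, x)
    · rw [hgne] at hgpq
      rcases Sym2.eq_iff.mp hgpq with ⟨h1, h2⟩ | ⟨h1, h2⟩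
      · rw [← h2] at hndxq
        exact hndxq (desc_refl x)
      · exact hne h2.symm
    · exact hprivcx g hg hgne hcovg
  subst hpx
  rw [hgpq] at hg
  have hnvq : ¬ t.desc v q := by
    intro hvq
    have hqx : t.desc q p := by
      rcases hTv q hvq with h | h | h
      · exact (desc_comparable h hxda).resolve_right hndxq
      · exact (desc_comparable h hxdb).resolve_right hndxq
      · exact (desc_comparable h hxdb').resolve_right hndxq
    have hqa : t.desc q a := desc_trans hqx hxda
    have haqE : s(a, q) ∈ E := by
      refine hsh _ havE _ ?_ (shadow_vertical_top hqa hvq)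
      rw [Sym2.mk_isDiag_iff]
      intro h
      rw [← h] at hqx
      exact hxa (leaf_desc_eq hla hqx)
    have hne12 : s(a, p) ≠ s(p, q) := by
      intro h
      rcases Sym2.eq_iff.mp h with ⟨h1, _⟩ | ⟨h1, _⟩
      · exact hxa h1.symm
      · rw [← h1] at hndxq
        exact hndxq hxda
    refine shrink2 hF haxF hg hne12 haqE (fun w hw => ?_)
    rcases hw with hw | hw
    · rcases covers_iff.mp hw with ⟨h1, h2⟩ | ⟨h1, h2⟩
      · exact covers_mk h1 (fun hwq => h2 (desc_trans hwq hqx))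
      · exact absurd (desc_trans h1 hxda) h2
    · rcases covers_iff.mp hw with ⟨h1, h2⟩ | ⟨h1, h2⟩
      · exact covers_mk (desc_trans h1 hxda) h2
      · refine covers_iff.mpr (Or.inr ⟨h1, fun hwa => ?_⟩)
        rcases desc_comparable hwa hxda with h | h
        · exact h2 h
        · exact hndxq (desc_trans h h1)
  have hnlockq : ¬ IsLockedLeaf t E q := by
    rintro ⟨d, d', v₂, hL⟩
    obtain ⟨hv2root, hdd'E, hdne, hd'z, hset₂, htw₂, hzdE, hcl₂⟩ := hL
    have hmem₂ : ∀ w : V, (t.IsLeaf w ∧ t.desc v₂ w) ↔ (w = q ∨ w = d ∨ w = d') := by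
      intro w
      have := Set.ext_iff.mp hset₂ w
      simpa using this
    have hlq : t.IsLeaf q := ((hmem₂ q).mpr (Or.inl rfl)).1
    have hv2q : t.desc v₂ q := ((hmem₂ q).mpr (Or.inl rfl)).2
    have hqxE : s(q, p) ∈ E := by
      rw [show s(q, p) = s(p, q) from Sym2.eq_swap]
      exact hF.1 hg
    have hupex₂ : ∃ w2, IsUpLink t E q w2 := by
      have hne2 : (Finset.univ.filter (fun y => s(q, y) ∈ E)).Nonempty :=
        ⟨p, by simp [hqxE]⟩
      obtain ⟨w2, hw2, hmin2⟩ := Finset.exists_min_image _ (t.depth) hne2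
      exact ⟨w2, (Finset.mem_filter.mp hw2).2, fun y hy => hmin2 y (by simp [hy])⟩
    obtain ⟨w2, hw2⟩ := hupex₂
    have hv2w2 := hcl₂ w2 hw2
    have hdep2 : ∀ y, s(q, y) ∈ E → t.depth v₂ ≤ t.depth y :=
      fun y hy => le_trans (desc_depth_le hv2w2) (hw2.2 y hy)
    have hv2x : t.desc v₂ p := by
      by_contra hnv2x
      obtain ⟨h2, hh2z, hh2x, hh2lca⟩ := exists_lca (t := t) q p
      have hh2v : t.desc h2 v₂ ∧ h2 ≠ v₂ := by
        rcases desc_comparable hh2z hv2q with hc | hc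
        · refine ⟨hc, ?_⟩
          rintro rfl
          exact hnv2x hh2x
        · exact absurd (desc_trans hc hh2x) hnv2x
      have hE2 : s(q, h2) ∈ E := by
        refine hsh _ hqxE _ ?_ (shadow_lca hh2x hh2lca)
        rw [Sym2.mk_isDiag_iff]
        intro hqh
        rw [← hqh] at hh2x
        exact hndxq ((leaf_desc_eq hlq hh2x) ▸ desc_refl p)
      have hd1 := hdep2 h2 hE2
      have hd2 := desc_depth_lt hh2v.1 hh2v.2
      omega
    have hv2v : t.desc v₂ v := by
      rcases desc_comparable hvx hv2x with h | h
      · exact absurd (desc_trans h hv2q) hnvq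
      · exact h
    have hclass : ∀ w : V, t.IsLeaf w → t.desc v w → (w = d ∨ w = d') := by
      intro w hw hvw
      rcases (hmem₂ w).mp ⟨hw, desc_trans hv2v hvw⟩ with h | h | h
      · exfalso
        rw [h] at hvw
        exact hnvq hvw
      · exact Or.inl h
      · exact Or.inr h
    have hmema := hclass a hla hva
    have hmemb := hclass b hlb hvb
    have hmemb' := hclass b' hlb' hvb'
    rcases hmema with h1 | h1 <;> rcases hmemb with h2 | h2 <;> rcases hmemb' with h3 | h3
    · exact hab (h1.trans h2.symm)
    · exact hab (h1.trans h2.symm)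
    · exact hab' (h1.trans h3.symm)
    · exact hbne (h2.trans h3.symm)
    · exact hbne (h2.trans h3.symm)
    · exact hab' (h1.trans h3.symm)
    · exact hab (h1.trans h2.symm)
    · exact hab (h1.trans h2.symm)
  exact ⟨u, hua, hub, hub', hulca, hxu, hxneu, hbb'F, q, hg, hnvq, hnlockq⟩



end TAP
end

section
/- Let W be the set of twin and locking links, M a maximum matching in E(L,L) \ W, and U the set of leaves unmatched by M. Let M_F = F(L,L) \ W and N = {bb' ∈ M : each of b, b' is unmatched by M_F}. Let J be the set of links in F not incident to a locked leaf, S the set of stems of T, and X = V \ (L ∪ S). Then (3/2)|F| ≥ (3/2)|M| + |U| + (1/2)|N| + (1/2)·Σ_{x ∈ X} d_J(x). -/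
/-!
Shadow-minimality forces every leaf to have degree one in `F`, so double counting the ends of
the links of `F` over `V = L ∪ S ∪ X` gives `2|F| = |L| + Σ_S d_F + Σ_X d_J + Σ_X d_{F∖J}`;
since a link has at most two leaf ends, also `|L| ≤ |F| + |F(L,L)|`. The links of `M_F`
together with those of `N` form a matching in `E(L,L) ∖ W`, whence `|M_F| + |N| ≤ |M|`.
The remaining links `F(L,L) ∩ W` are charged injectively to incidences of `F` at stems or of
`F ∖ J` at nodes of `X`: a twin link to the link of `F` ending at its stem, a link locking `a`
to the link of `F` at `a`, which ends at an inner node of the locking tree. Together with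
`|L| = 2|M| + |U|` these inequalities add up to the bound.
-/

open scoped Classical

namespace TAP.Tree

variable {V : Type} {t : Tree V}

theorem desc_refl (v : V) : t.desc v v := ⟨0, rfl⟩

theorem desc_trans {u v w : V} (h₁ : t.desc u v) (h₂ : t.desc v w) : t.desc u w := by
  obtain ⟨n, rfl⟩ := h₁
  obtain ⟨m, rfl⟩ := h₂
  exact ⟨n + m, Function.iterate_add_apply _ _ _ _⟩

theorem desc_root (v : V) : t.desc t.root v := t.reach v

theorem eq_root_of_desc_root {w : V} (h : t.desc w t.root) : w = t.root := by
  obtain ⟨n, rfl⟩ := h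
  exact Function.iterate_fixed t.parent_root n

theorem IsLeaf.eq_of_desc {a v : V} (ha : t.IsLeaf a) (h : t.desc a v) : v = a := by
  obtain ⟨n, hn⟩ := h
  induction n generalizing v with
  | zero => exact hn
  | succ n ih =>
    rw [Function.iterate_succ_apply] at hn
    by_contra hv
    exact ha.2 v hv (ih hn)

theorem desc_total {w w' v : V} (h : t.desc w v) (h' : t.desc w' v) :
    t.desc w w' ∨ t.desc w' w := by
  obtain ⟨n, rfl⟩ := h
  obtain ⟨m, rfl⟩ := h'
  rcases le_total n m with hnm | hmn
  · exact Or.inr ⟨m - n, by rw [← Function.iterate_add_apply, Nat.sub_add_cancel hnm]⟩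
  · exact Or.inl ⟨n - m, by rw [← Function.iterate_add_apply, Nat.sub_add_cancel hmn]⟩

theorem iterate_depth (v : V) : t.parent^[t.depth v] v = t.root :=
  @Nat.find_spec _ (Classical.decPred _) (t.reach v)

theorem depth_le_of_iterate {v : V} {n : ℕ} (h : t.parent^[n] v = t.root) : t.depth v ≤ n :=
  @Nat.find_min' _ (Classical.decPred _) (t.reach v) n h

theorem depth_root : t.depth t.root = 0 :=
  Nat.le_zero.1 (depth_le_of_iterate rfl)

theorem depth_add_le_or_eq_root {v : V} {n : ℕ} :
    t.depth (t.parent^[n] v) + n ≤ t.depth v ∨ t.parent^[n] v = t.root := by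
  rcases le_total n (t.depth v) with hn | hn
  · left
    have : t.parent^[t.depth v - n] (t.parent^[n] v) = t.root := by
      rw [← Function.iterate_add_apply, Nat.sub_add_cancel hn, iterate_depth]
    have := depth_le_of_iterate this
    omega
  · right
    rw [← Nat.sub_add_cancel hn, Function.iterate_add_apply, iterate_depth,
      Function.iterate_fixed t.parent_root]

theorem depth_le_of_desc {w v : V} (h : t.desc w v) : t.depth w ≤ t.depth v := by
  obtain ⟨n, rfl⟩ := h
  rcases depth_add_le_or_eq_root (t := t) (v := v) (n := n) with h | h
  · omega
  · rw [h, depth_root]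
    exact Nat.zero_le _

theorem eq_of_desc_of_depth_le {w v : V} (h : t.desc w v) (hd : t.depth v ≤ t.depth w) :
    w = v := by
  obtain ⟨n, rfl⟩ := h
  rcases depth_add_le_or_eq_root (t := t) (v := v) (n := n) with h | h
  · obtain rfl : n = 0 := by omega
    rfl
  · rw [h, depth_root, Nat.le_zero] at hd
    have hv := iterate_depth (t := t) v
    rw [hd, Function.iterate_zero_apply] at hv
    rw [h, hv]

theorem desc_antisymm {w v : V} (h₁ : t.desc w v) (h₂ : t.desc v w) : w = v :=
  eq_of_desc_of_depth_le h₁ (depth_le_of_desc h₂)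

theorem exists_isLCA (a b : V) : ∃ c, t.IsLCA c a b := by
  classical
  have h : ∃ i, t.desc (t.parent^[i] a) b :=
    ⟨t.depth a, by rw [iterate_depth]; exact desc_root b⟩
  refine ⟨t.parent^[Nat.find h] a, ⟨_, rfl⟩, Nat.find_spec h, ?_⟩
  rintro w ⟨j, rfl⟩ hwb
  exact ⟨j - Nat.find h,
    by rw [← Function.iterate_add_apply, Nat.sub_add_cancel (Nat.find_min' h hwb)]⟩

end TAP.Tree

namespace TAP

open Finset

variable {V : Type} {t : Tree V} {E F : Finset (Sym2 V)}

theorem covers_mk_iff {a b w : V} : covers t s(a, b) w ↔ t.onPath w a b := by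
  constructor
  · rintro ⟨u, v, he, hp⟩
    rcases Sym2.eq_iff.1 he with ⟨rfl, rfl⟩ | ⟨rfl, rfl⟩
    · exact hp
    · exact hp.symm
  · exact fun h => ⟨a, b, rfl, h⟩

theorem not_covers_of_isDiag {e : Sym2 V} (he : e.IsDiag) (w : V) : ¬ covers t e w := by
  rintro ⟨u, v, rfl, hp⟩
  obtain rfl := Sym2.mk_isDiag_iff.1 he
  rcases hp with ⟨h₁, h₂⟩ | ⟨h₁, h₂⟩ <;> exact h₂ h₁

theorem mem_of_covers_of_isLeaf {e : Sym2 V} {a : V} (ha : t.IsLeaf a) (h : covers t e a) :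
    a ∈ e := by
  obtain ⟨u, v, rfl, hp⟩ := h
  rcases hp with ⟨h₁, -⟩ | ⟨h₁, -⟩
  · rw [ha.eq_of_desc h₁]; exact Sym2.mem_mk_left _ _
  · rw [ha.eq_of_desc h₁]; exact Sym2.mem_mk_right _ _

theorem IsCover.exists_mem_of_isLeaf (hF : IsCover t F) {a : V} (ha : t.IsLeaf a) :
    ∃ e ∈ F, a ∈ e := by
  obtain ⟨e, he, hc⟩ := hF a ha.1
  exact ⟨e, he, mem_of_covers_of_isLeaf ha hc⟩

/-- The hypothesis on `c` says that it lies between `a` and the least common ancestor of `a`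
and `b`. -/
theorem shadow_mk_of_desc {a b c : V} (hca : t.desc c a)
    (hc : ∀ w, t.desc w a → t.desc w b → t.desc w c) : Shadow t s(c, b) s(a, b) := by
  intro w hw
  rw [covers_mk_iff] at hw ⊢
  rcases hw with ⟨h₁, h₂⟩ | ⟨h₁, h₂⟩
  · exact Or.inl ⟨Tree.desc_trans h₁ hca, h₂⟩
  · exact Or.inr ⟨h₁, fun hwa => h₂ (hc w hwa h₁)⟩

theorem Tree.IsLCA.shadow {a b c : V} (hc : t.IsLCA c a b) : Shadow t s(c, b) s(a, b) :=
  shadow_mk_of_desc hc.1 hc.2.2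

theorem mk_eq_of_eq_or_eq {c d x y : V} (hc : c = x ∨ c = y) (hd : d = x ∨ d = y)
    (hcd : c ≠ d) : s(c, d) = s(x, y) := by
  rcases hc with rfl | rfl <;> rcases hd with rfl | rfl
  · exact absurd rfl hcd
  · rfl
  · exact Sym2.eq_swap
  · exact absurd rfl hcd

theorem rel_singleton_iff {e : Sym2 V} {x y : V} :
    rel t {e} x y ↔ ∀ w, w ≠ t.root → t.onPath w x y → covers t e w := by
  simp only [rel, coveredBy, mem_singleton, exists_eq_left]

namespace TwinPair

variable {a b c d σ : V}

theorem stem_ne_root (htw : TwinPair t c d) (hσ : t.IsLCA σ c d) : σ ≠ t.root := by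
  have h := htw.2.2.2.1
  rw [rel_singleton_iff] at h
  push Not at h
  obtain ⟨w, hwr, hp, hnc⟩ := h
  have hwc : t.desc w c := by
    rcases hp with ⟨h₁, -⟩ | ⟨h₁, -⟩
    · exact h₁
    · exact absurd (Tree.eq_root_of_desc_root h₁) hwr
  have hwd : t.desc w d := not_not.1 fun h => hnc (covers_mk_iff.2 (Or.inl ⟨hwc, h⟩))
  rintro rfl
  exact hwr (Tree.eq_root_of_desc_root (hσ.2.2 w hwc hwd))

theorem rel_of_desc_stem (htw : TwinPair t c d) (hσ : t.IsLCA σ c d) {x : V}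
    (hx : t.desc σ x) : rel t {s(c, d)} x c := by
  obtain ⟨n, hn⟩ := hx
  induction n generalizing x with
  | zero =>
    rw [Function.iterate_zero_apply] at hn
    subst hn
    rw [rel_singleton_iff]
    rintro w - (⟨h₁, h₂⟩ | ⟨h₁, h₂⟩)
    · exact absurd (Tree.desc_trans h₁ hσ.1) h₂
    · exact covers_mk_iff.2 (Or.inl ⟨h₁, fun hd => h₂ (hσ.2.2 w h₁ hd)⟩)
  | succ n ih =>
    rw [Function.iterate_succ_apply] at hn
    exact htw.2.2.2.2 x (ih hn)

theorem onPath_of_desc_stem (htw : TwinPair t c d) (hσ : t.IsLCA σ c d) {w : V}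
    (hσw : t.desc σ w) (hwσ : w ≠ σ) : w ≠ t.root ∧ t.onPath w c d := by
  have hwr : w ≠ t.root := by
    rintro rfl
    exact htw.stem_ne_root hσ (Tree.eq_root_of_desc_root hσw)
  refine ⟨hwr, ?_⟩
  by_cases hc : t.desc w c
  · exact Or.inl ⟨hc, fun hd => hwσ (Tree.desc_antisymm (hσ.2.2 w hc hd) hσw)⟩
  · exact covers_mk_iff.1 (rel_singleton_iff.1 (htw.rel_of_desc_stem hσ hσw) w hwr
      (Or.inl ⟨Tree.desc_refl w, hc⟩))

theorem stem_not_isLeaf (htw : TwinPair t c d) (hσ : t.IsLCA σ c d) : ¬ t.IsLeaf σ :=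
  fun hl => htw.2.2.1 ((hl.eq_of_desc hσ.1).trans (hl.eq_of_desc hσ.2.1).symm)

theorem eq_or_eq_of_isLeaf_of_desc (htw : TwinPair t c d) (hσ : t.IsLCA σ c d) {x : V}
    (hx : t.IsLeaf x) (hσx : t.desc σ x) : x = c ∨ x = d := by
  have hxσ : x ≠ σ := by
    rintro rfl
    exact htw.stem_not_isLeaf hσ hx
  rcases (htw.onPath_of_desc_stem hσ hσx hxσ).2 with ⟨h₁, -⟩ | ⟨h₁, -⟩
  · exact Or.inl (hx.eq_of_desc h₁).symm
  · exact Or.inr (hx.eq_of_desc h₁).symm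

theorem mk_eq_of_isLCA {c' d' : V} (htw : TwinPair t c d) (hσ : t.IsLCA σ c d)
    (htw' : TwinPair t c' d') (hσ' : t.IsLCA σ c' d') : s(c', d') = s(c, d) :=
  mk_eq_of_eq_or_eq (htw.eq_or_eq_of_isLeaf_of_desc hσ htw'.1 hσ'.1)
    (htw.eq_or_eq_of_isLeaf_of_desc hσ htw'.2.1 hσ'.2.1) htw'.2.2.1

theorem eq_right {b' : V} (h : TwinPair t a b) (h' : TwinPair t a b') : b = b' := by
  obtain ⟨σ, hσ⟩ := t.exists_isLCA a b
  obtain ⟨σ', hσ'⟩ := t.exists_isLCA a b'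
  rcases Tree.desc_total hσ.1 hσ'.1 with hd | hd
  · rcases h.eq_or_eq_of_isLeaf_of_desc hσ h'.2.1 (Tree.desc_trans hd hσ'.2.1) with he | he
    · exact absurd he.symm h'.2.2.1
    · exact he.symm
  · rcases h'.eq_or_eq_of_isLeaf_of_desc hσ' h.2.1 (Tree.desc_trans hd hσ.2.1) with he | he
    · exact absurd he.symm h.2.2.1
    · exact he

end TwinPair

theorem IsStem.not_isLeaf {x : V} (h : IsStem t E x) : ¬ t.IsLeaf x := by
  obtain ⟨a, b, htw, -, hσ⟩ := h
  exact htw.stem_not_isLeaf hσ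

namespace LocksAt

variable {a b b' v : V}

theorem isLeaf_and_desc_iff (hL : LocksAt t E b b' a v) (x : V) :
    t.IsLeaf x ∧ t.desc v x ↔ x = a ∨ x = b ∨ x = b' := by
  simpa using Set.ext_iff.1 hL.2.2.2.2.1 x

theorem mk_eq_of_twinPair {c d σ : V} (hL : LocksAt t E b b' a v) (htw : TwinPair t c d)
    (hσ : t.IsLCA σ c d) (hvσ : t.desc v σ) (hcov : covers t s(a, σ) σ) :
    s(c, d) = s(b, b') := by
  have hσa : ¬ t.desc σ a := by
    rcases covers_mk_iff.1 hcov with ⟨-, h⟩ | ⟨-, h⟩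
    · exact absurd (Tree.desc_refl σ) h
    · exact h
  have key : ∀ x, t.IsLeaf x → t.desc σ x → x = b ∨ x = b' := fun x hx hσx => by
    rcases (hL.isLeaf_and_desc_iff x).1 ⟨hx, Tree.desc_trans hvσ hσx⟩ with rfl | h | h
    · exact absurd hσx hσa
    · exact Or.inl h
    · exact Or.inr h
  exact mk_eq_of_eq_or_eq (key c htw.1 hσ.1) (key d htw.2.1 hσ.2.1) htw.2.2.1

end LocksAt

theorem IsMatching.mono {M N : Finset (Sym2 V)} (hM : IsMatching M) (h : N ⊆ M) :
    IsMatching N :=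
  ⟨fun e he => hM.1 e (h he), fun e he f hf => hM.2 e (h he) f (h hf)⟩

section DecidableEq

variable [DecidableEq V]

theorem ShadowsMinimal.not_isDiag (hF : ShadowsMinimal t F) {e : Sym2 V} (he : e ∈ F) :
    ¬ e.IsDiag := by
  intro hd
  refine hF.2.1 e he fun w hw => ?_
  obtain ⟨f, hf, hfw⟩ := hF.1 w hw
  refine ⟨f, mem_erase.2 ⟨?_, hf⟩, hfw⟩
  rintro rfl
  exact not_covers_of_isDiag hd w hfw

theorem ShadowsMinimal.exists_uniquely_covered (hF : ShadowsMinimal t F) {e g : Sym2 V}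
    (he : e ∈ F) (hg : ProperShadow t g e) :
    ∃ w, covers t e w ∧ ¬ covers t g w ∧ ∀ f ∈ F, covers t f w → f = e := by
  by_contra! h
  refine hF.2.2 e he g hg fun w hw => ?_
  obtain ⟨f, hf, hfw⟩ := hF.1 w hw
  by_cases hfe : f = e
  · subst hfe
    by_cases hgw : covers t g w
    · exact ⟨g, mem_insert_self _ _, hgw⟩
    · obtain ⟨f', hf', hf'w, hne⟩ := h w hfw hgw
      exact ⟨f', mem_insert_of_mem (mem_erase.2 ⟨hne, hf'⟩), hf'w⟩
  · exact ⟨f, mem_insert_of_mem (mem_erase.2 ⟨hfe, hf⟩), hfw⟩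

theorem ShadowsMinimal.eq_of_isLCA_of_desc (hF : ShadowsMinimal t F) {a b b' c c' : V}
    (ha : t.IsLeaf a) (hf : s(a, b) ∈ F) (hg : s(a, b') ∈ F) (hc : t.IsLCA c a b)
    (hc' : t.IsLCA c' a b') (hcc' : t.desc c' c) : s(a, b) = s(a, b') := by
  by_contra hne
  have hba : b ≠ a := fun h => hF.not_isDiag hf (Sym2.mk_isDiag_iff.2 h.symm)
  have hca : c ≠ a := fun h => hba (ha.eq_of_desc (h ▸ hc.2.1))
  have hproper : ProperShadow t s(c, b) s(a, b) := by
    refine ⟨hc.shadow, a, covers_mk_iff.2 (Or.inl ⟨Tree.desc_refl a, fun h => hba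
      (ha.eq_of_desc h)⟩), fun h => ?_⟩
    rcases covers_mk_iff.1 h with ⟨h₁, -⟩ | ⟨h₁, -⟩
    · exact hca (ha.eq_of_desc h₁)
    · exact hba (ha.eq_of_desc h₁)
  obtain ⟨w, hw, hgw, huniq⟩ := hF.exists_uniquely_covered hf hproper
  refine hne (huniq _ hg ?_).symm
  rw [covers_mk_iff] at hw hgw ⊢
  rcases hw with ⟨h₁, h₂⟩ | ⟨h₁, h₂⟩
  · have hwc : ¬ t.desc w c := fun h => hgw (Or.inl ⟨h, h₂⟩)
    exact Or.inl ⟨h₁, fun h => hwc (Tree.desc_trans (hc'.2.2 w h₁ h) hcc')⟩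
  · have hwc : t.desc w c := not_not.1 fun h => hgw (Or.inr ⟨h₁, h⟩)
    exact absurd (Tree.desc_trans hwc hc.1) h₂

theorem ShadowsMinimal.eq_of_isLeaf (hF : ShadowsMinimal t F) {a : V} (ha : t.IsLeaf a)
    {f g : Sym2 V} (hf : f ∈ F) (hg : g ∈ F) (haf : a ∈ f) (hag : a ∈ g) : f = g := by
  obtain ⟨b, rfl⟩ := Sym2.mem_iff_exists.1 haf
  obtain ⟨b', rfl⟩ := Sym2.mem_iff_exists.1 hag
  obtain ⟨c, hc⟩ := t.exists_isLCA a b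
  obtain ⟨c', hc'⟩ := t.exists_isLCA a b'
  rcases Tree.desc_total hc.1 hc'.1 with h | h
  · exact (hF.eq_of_isLCA_of_desc ha hg hf hc' hc h).symm
  · exact hF.eq_of_isLCA_of_desc ha hf hg hc hc' h

theorem ShadowsMinimal.deg_eq_one (hF : ShadowsMinimal t F) {a : V} (ha : t.IsLeaf a) :
    deg F a = 1 := by
  obtain ⟨f, hf, haf⟩ := hF.1.exists_mem_of_isLeaf ha
  refine card_eq_one.2 ⟨f, eq_singleton_iff_unique_mem.2 ⟨?_, ?_⟩⟩
  · exact mem_filter.2 ⟨hf, haf⟩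
  · intro g hg
    obtain ⟨hgF, hag⟩ := mem_filter.1 hg
    exact hF.eq_of_isLeaf ha hgF hf hag haf

/-- Otherwise the link over the edge above the stem could be shortened to end at the stem,
since the twin link covers the edges below it. -/
theorem TwinPair.exists_mem_covers_stem (hF : ShadowsMinimal t F) {c d σ : V}
    (htw : TwinPair t c d) (hσ : t.IsLCA σ c d) (hcd : s(c, d) ∈ F) :
    ∃ f ∈ F, σ ∈ f ∧ covers t f σ := by
  suffices key : ∀ u v, s(u, v) ∈ F → t.desc σ u → ¬ t.desc σ v → σ = u by
    obtain ⟨f, hf, hfσ⟩ := hF.1 σ (htw.stem_ne_root hσ)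
    refine ⟨f, hf, ?_, hfσ⟩
    obtain ⟨u, v, rfl, hp⟩ := hfσ
    rcases hp with ⟨h₁, h₂⟩ | ⟨h₁, h₂⟩
    · exact key u v hf h₁ h₂ ▸ Sym2.mem_mk_left _ _
    · exact key v u (Sym2.eq_swap ▸ hf) h₁ h₂ ▸ Sym2.mem_mk_right _ _
  intro u v hf hσu hσv
  by_contra hσu'
  have hproper : ProperShadow t s(σ, v) s(u, v) := by
    refine ⟨shadow_mk_of_desc hσu fun w hwu hwv =>
        (Tree.desc_total hwu hσu).resolve_right fun h => hσv (Tree.desc_trans h hwv), u,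
      covers_mk_iff.2 (Or.inl ⟨Tree.desc_refl u, fun h => hσv (Tree.desc_trans hσu h)⟩),
      fun h => ?_⟩
    rcases covers_mk_iff.1 h with ⟨h₁, -⟩ | ⟨h₁, -⟩
    · exact hσu' (Tree.desc_antisymm hσu h₁)
    · exact hσv (Tree.desc_trans hσu h₁)
  obtain ⟨w, hw, hgw, huniq⟩ := hF.exists_uniquely_covered hf hproper
  rw [covers_mk_iff] at hw hgw
  rcases hw with ⟨h₁, h₂⟩ | ⟨h₁, h₂⟩
  · have hwσ : ¬ t.desc w σ := fun h => hgw (Or.inl ⟨h, h₂⟩)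
    have hσw : t.desc σ w := (Tree.desc_total h₁ hσu).resolve_left hwσ
    have hne : w ≠ σ := by
      rintro rfl
      exact hwσ (Tree.desc_refl w)
    have heq := huniq _ hcd (covers_mk_iff.2 (htw.onPath_of_desc_stem hσ hσw hne).2)
    have hcov : covers t s(c, d) σ := heq ▸ covers_mk_iff.2 (Or.inl ⟨hσu, hσv⟩)
    rcases covers_mk_iff.1 hcov with ⟨-, h⟩ | ⟨-, h⟩
    · exact h hσ.2.1
    · exact h hσ.1
  · exact h₂ (Tree.desc_trans (not_not.1 fun h => hgw (Or.inr ⟨h₁, h⟩)) hσu)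

theorem LocksAt.mk_eq_of_locksAt (hF : ShadowsMinimal t F) {a b b' b₂ b₂' v v₂ : V}
    (hL : LocksAt t E b b' a v) (hL₂ : LocksAt t E b₂ b₂' a v₂) (he : s(b, b') ∈ F)
    (he₂ : s(b₂, b₂') ∈ F) : s(b, b') = s(b₂, b₂') := by
  obtain rfl : b = b₂ := hL.2.2.2.2.2.1.eq_right hL₂.2.2.2.2.2.1
  exact hF.eq_of_isLeaf hL.2.2.2.2.2.1.2.1 he he₂ (Sym2.mem_mk_left _ _) (Sym2.mem_mk_left _ _)

theorem deg_eq_deg_add_deg_sdiff {J : Finset (Sym2 V)} (hJ : J ⊆ F) (x : V) :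
    deg F x = deg J x + deg (F \ J) x := by
  unfold deg
  rw [← card_union_of_disjoint (disjoint_filter_filter disjoint_sdiff),
    ← filter_union, union_sdiff_of_subset hJ]

theorem sum_deg_eq_sum_card_filter (s : Finset V) (Y : Finset (Sym2 V)) :
    ∑ x ∈ s, deg Y x = ∑ e ∈ Y, #(s.filter (· ∈ e)) := by
  simp only [deg, card_filter]
  exact sum_comm

theorem sum_deg_le_card_add_card_filter {Y : Finset (Sym2 V)} (hY : ∀ e ∈ Y, ¬ e.IsDiag)
    (s : Finset V) : ∑ x ∈ s, deg Y x ≤ #Y + #(Y.filter fun e => ∀ x ∈ e, x ∈ s) := by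
  rw [sum_deg_eq_sum_card_filter, card_filter, card_eq_sum_ones,
    ← sum_add_distrib]
  refine sum_le_sum fun e he => ?_
  have hsub : s.filter (· ∈ e) ⊆ e.toFinset :=
    fun x hx => Sym2.mem_toFinset.2 (mem_filter.1 hx).2
  have htwo := Sym2.card_toFinset_of_not_isDiag e (hY e he)
  split_ifs with hall
  · exact (card_le_card hsub).trans htwo.le
  · push Not at hall
    obtain ⟨x, hxe, hxs⟩ := hall
    have := card_lt_card ((ssubset_iff_of_subset hsub).2
      ⟨x, Sym2.mem_toFinset.2 hxe, fun h => hxs (mem_filter.1 h).1⟩)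
    omega

theorem IsMatching.union {A B : Finset (Sym2 V)} (hA : IsMatching A) (hB : IsMatching B)
    (hAB : ∀ e ∈ A, ∀ f ∈ B, ∀ x ∈ e, x ∉ f) : IsMatching (A ∪ B) := by
  refine ⟨fun e he => (mem_union.1 he).elim (hA.1 e) (hB.1 e), ?_⟩
  intro e he f hf hne x hxe
  rcases mem_union.1 he with he | he <;> rcases mem_union.1 hf with hf | hf
  · exact hA.2 e he f hf hne x hxe
  · exact hAB e he f hf x hxe
  · exact fun hxf => hAB f hf e he x hxf hxe
  · exact hB.2 e he f hf hne x hxe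

theorem IsMatching.card_eq {M : Finset (Sym2 V)} (hM : IsMatching M) {s : Finset V}
    (hs : ∀ e ∈ M, ∀ x ∈ e, x ∈ s) :
    #s = 2 * #M + #(s.filter fun x => ∀ e ∈ M, x ∉ e) := by
  have hmatched : s.filter (fun x => ∃ e ∈ M, x ∈ e) = M.biUnion Sym2.toFinset := by
    ext x
    simp only [mem_filter, mem_biUnion, Sym2.mem_toFinset]
    exact ⟨And.right, fun ⟨e, he, hx⟩ => ⟨hs e he x hx, e, he, hx⟩⟩
  have hcard : #(M.biUnion Sym2.toFinset) = 2 * #M := by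
    rw [card_biUnion, sum_congr rfl fun e he =>
      Sym2.card_toFinset_of_not_isDiag e (hM.1 e he), sum_const, smul_eq_mul, mul_comm]
    intro e he f hf hne
    exact disjoint_left.2 fun x hxe hxf =>
      hM.2 e he f hf hne x (Sym2.mem_toFinset.1 hxe) (Sym2.mem_toFinset.1 hxf)
  rw [← card_filter_add_card_filter_not (p := fun x => ∃ e ∈ M, x ∈ e), hmatched,
    hcard]
  simp only [not_exists, not_and]

def ChargedTo (t : Tree V) (E F : Finset (Sym2 V)) (e : Sym2 V) (p : V × Sym2 V) : Prop :=
  p.2 ∈ F ∧ p.1 ∈ p.2 ∧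
    ((∃ c d, e = s(c, d) ∧ TwinPair t c d ∧ t.IsLCA p.1 c d ∧ covers t p.2 p.1) ∨
      ∃ a b b' v, e = s(b, b') ∧ LocksAt t E b b' a v ∧ p.2 = s(a, p.1) ∧
        ¬ t.IsLeaf p.1 ∧ t.desc v p.1)

def incidences (s : Finset V) (Y : Finset (Sym2 V)) : Finset (V × Sym2 V) :=
  (s ×ˢ Y).filter fun p => p.1 ∈ p.2

theorem card_incidences (s : Finset V) (Y : Finset (Sym2 V)) :
    #(incidences s Y) = ∑ x ∈ s, deg Y x := by
  rw [incidences, card_filter, sum_product]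
  simp only [deg, card_filter]

theorem ChargedTo.eq (hF : ShadowsMinimal t F) {e e' : Sym2 V} {p : V × Sym2 V}
    (he : e ∈ F) (he' : e' ∈ F) (h : ChargedTo t E F e p) (h' : ChargedTo t E F e' p) :
    e = e' := by
  obtain ⟨-, -, ⟨c, d, rfl, htw, hσ, hcov⟩ | ⟨a, b, b', v, rfl, hL, hpa, -, hvp⟩⟩ := h <;>
    obtain ⟨-, -, ⟨c', d', rfl, htw', hσ', hcov'⟩ | ⟨a', b₂, b₂', v', rfl, hL', hpa', -, hvp'⟩⟩ :=
      h'
  · exact (htw.mk_eq_of_isLCA hσ htw' hσ').symm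
  · exact hL'.mk_eq_of_twinPair htw hσ hvp' (hpa' ▸ hcov)
  · exact (hL.mk_eq_of_twinPair htw' hσ' hvp (hpa ▸ hcov')).symm
  · obtain rfl : a = a' := Sym2.congr_left.1 (hpa.symm.trans hpa')
    exact hL.mk_eq_of_locksAt hF hL' he he'

end DecidableEq

section Fintype

variable [Fintype V]

theorem exists_isUpLink {a z : V} (h : s(a, z) ∈ E) : ∃ u, IsUpLink t E a u := by
  obtain ⟨u, hu, hmin⟩ :=
    (univ.filter fun x => s(a, x) ∈ E).exists_min_image t.depth ⟨z, by simpa using h⟩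
  exact ⟨u, (mem_filter.1 hu).2, fun x hx => hmin x (by simpa using hx)⟩

theorem sum_eq_sum_leaves_add_sum_stems_add_sum_Xset (f : V → ℕ) :
    ∑ x, f x = ∑ x ∈ univ.filter t.IsLeaf, f x + ∑ x ∈ stems t E, f x
      + ∑ x ∈ Xset t E, f x := by
  rw [← sum_filter_add_sum_filter_not univ t.IsLeaf,
    ← sum_filter_add_sum_filter_not (univ.filter fun x => ¬ t.IsLeaf x)
      (IsStem t E), filter_filter, filter_filter, add_assoc]
  congr 3
  exact filter_congr fun x _ => ⟨And.right, fun h => ⟨h.not_isLeaf, h⟩⟩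

end Fintype

section Counting

variable [Fintype V] [DecidableEq V]

theorem LocksAt.exists_mem_desc_not_isLeaf (hsh : ShadowClosed t E) (hFE : F ⊆ E)
    (hF : ShadowsMinimal t F) {a b b' v : V} (hL : LocksAt t E b b' a v)
    (hbb' : s(b, b') ∈ F) : ∃ z, s(a, z) ∈ F ∧ ¬ t.IsLeaf z ∧ t.desc v z := by
  obtain ⟨ha, hva⟩ := (hL.isLeaf_and_desc_iff a).2 (Or.inl rfl)
  obtain ⟨f, hf, haf⟩ := hF.1.exists_mem_of_isLeaf ha
  obtain ⟨z, rfl⟩ := Sym2.mem_iff_exists.1 haf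
  have hza : z ≠ a := fun h => hF.not_isDiag hf (Sym2.mk_isDiag_iff.2 h.symm)
  obtain ⟨c, hc⟩ := t.exists_isLCA z a
  have hca : c ≠ a := fun h => hza (ha.eq_of_desc (h ▸ hc.1))
  -- the shadow `ac` of `az` is a link at `a`, so the up-node of `a` is no higher than `c`
  have hcE : s(a, c) ∈ E := Sym2.eq_swap ▸ hsh _ (hFE hf) _
    (fun h => hca (Sym2.mk_isDiag_iff.1 h)) (Sym2.eq_swap (a := z) ▸ hc.shadow)
  obtain ⟨u, hu⟩ := exists_isUpLink (hFE hf)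
  have hvc : t.desc v c := by
    rcases Tree.desc_total hva hc.2.1 with h | h
    · exact h
    · rw [Tree.eq_of_desc_of_depth_le h
        ((Tree.depth_le_of_desc (hL.2.2.2.2.2.2.2 u hu)).trans (hu.2 c hcE))]
      exact Tree.desc_refl v
  refine ⟨z, hf, fun hz => ?_, Tree.desc_trans hvc hc.1⟩
  have htw := hL.2.2.2.2.2.1
  -- the leaves `b` and `b'` of `T_v` have degree one in `F`, used up by `bb'`
  rcases (hL.isLeaf_and_desc_iff z).1 ⟨hz, Tree.desc_trans hvc hc.1⟩ with rfl | rfl | rfl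
  · exact hza rfl
  · rcases Sym2.eq_iff.1 (hF.eq_of_isLeaf hz hf hbb' (Sym2.mem_mk_right _ _)
      (Sym2.mem_mk_left _ _)) with ⟨h, -⟩ | ⟨h, -⟩
    · exact htw.2.2.1 h
    · exact hL.2.2.2.1 h.symm
  · rcases Sym2.eq_iff.1 (hF.eq_of_isLeaf hz hf hbb' (Sym2.mem_mk_right _ _)
      (Sym2.mem_mk_right _ _)) with ⟨h, -⟩ | ⟨h, -⟩
    · exact htw.2.2.1 h
    · exact hL.2.2.2.1 h.symm

theorem exists_chargedTo (hsh : ShadowClosed t E) (hFE : F ⊆ E) (hF : ShadowsMinimal t F)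
    {e : Sym2 V} (he : e ∈ F) (hW : e ∈ Wlinks t E) : ∃ p, ChargedTo t E F e p := by
  rcases (mem_filter.1 hW).2 with ⟨c, d, rfl, htw⟩ | ⟨b, b', a, rfl, v, hL⟩
  · obtain ⟨σ, hσ⟩ := t.exists_isLCA c d
    obtain ⟨f, hf, hσf, hcov⟩ := htw.exists_mem_covers_stem hF hσ he
    exact ⟨(σ, f), hf, hσf, Or.inl ⟨c, d, rfl, htw, hσ, hcov⟩⟩
  · obtain ⟨z, hz, hnl, hvz⟩ := hL.exists_mem_desc_not_isLeaf hsh hFE hF he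
    exact ⟨(z, s(a, z)), hz, Sym2.mem_mk_right _ _,
      Or.inr ⟨a, b, b', v, rfl, hL, rfl, hnl, hvz⟩⟩

theorem ChargedTo.mem_incidences {e : Sym2 V} {p : V × Sym2 V} (hW : e ∈ Wlinks t E)
    (h : ChargedTo t E F e p) :
    p ∈ incidences (stems t E) F ∪ incidences (Xset t E) (F \ Jlinks t E F) := by
  obtain ⟨hpF, hpe, ⟨c, d, rfl, htw, hσ, -⟩ | ⟨a, b, b', v, -, hL, hpa, hnl, -⟩⟩ := h
  · have hstem : IsStem t E p.1 := ⟨c, d, htw, (mem_filter.1 hW).1, hσ⟩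
    simp only [incidences, mem_union, mem_filter, mem_product, stems, mem_univ, true_and]
    exact Or.inl ⟨⟨hstem, hpF⟩, hpe⟩
  · have hJ : p.2 ∉ Jlinks t E F := fun hJ =>
      (mem_filter.1 hJ).2 a (hpa ▸ Sym2.mem_mk_left _ _) ⟨b, b', v, hL⟩
    simp only [incidences, mem_union, mem_filter, mem_product, stems, Xset, mem_univ,
      true_and, mem_sdiff]
    by_cases hstem : IsStem t E p.1
    · exact Or.inl ⟨⟨hstem, hpF⟩, hpe⟩
    · exact Or.inr ⟨⟨⟨hnl, hstem⟩, hpF, hJ⟩, hpe⟩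

theorem card_inter_Wlinks_le (hsh : ShadowClosed t E) (hFE : F ⊆ E)
    (hF : ShadowsMinimal t F) :
    #(F ∩ Wlinks t E) ≤
      ∑ x ∈ stems t E, deg F x + ∑ x ∈ Xset t E, deg (F \ Jlinks t E F) x := by
  calc #(F ∩ Wlinks t E)
      ≤ #(incidences (stems t E) F ∪ incidences (Xset t E) (F \ Jlinks t E F)) := by
        refine card_le_card_of_forall_subsingleton (ChargedTo t E F) (fun e he => ?_)
          fun p _ e he e' he' => he.2.eq hF (mem_inter.1 he.1).1 (mem_inter.1 he'.1).1 he'.2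
        obtain ⟨heF, heW⟩ := mem_inter.1 he
        obtain ⟨p, hp⟩ := exists_chargedTo hsh hFE hF heF heW
        exact ⟨p, hp.mem_incidences heW, hp⟩
    _ ≤ _ := card_union_le _ _
    _ = _ := by rw [card_incidences, card_incidences]

theorem ShadowsMinimal.sum_deg_leaves (hF : ShadowsMinimal t F) :
    ∑ x ∈ univ.filter t.IsLeaf, deg F x = #(univ.filter t.IsLeaf) := by
  rw [sum_congr rfl fun x hx => hF.deg_eq_one (mem_filter.1 hx).2, sum_const, smul_eq_mul,
    mul_one]

theorem two_mul_card_eq (hF : ShadowsMinimal t F) :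
    2 * #F = #(univ.filter t.IsLeaf) + ∑ x ∈ stems t E, deg F x
      + ∑ x ∈ Xset t E, deg (Jlinks t E F) x
      + ∑ x ∈ Xset t E, deg (F \ Jlinks t E F) x := by
  have hsum : ∑ x, deg F x = 2 * #F := by
    rw [sum_deg_eq_sum_card_filter, sum_congr rfl fun e he => ?_, sum_const, smul_eq_mul,
      mul_comm]
    rw [show univ.filter (· ∈ e) = e.toFinset by ext; simp [Sym2.mem_toFinset]]
    exact Sym2.card_toFinset_of_not_isDiag e (hF.not_isDiag he)
  have hX : ∑ x ∈ Xset t E, deg F x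
      = ∑ x ∈ Xset t E, deg (Jlinks t E F) x + ∑ x ∈ Xset t E, deg (F \ Jlinks t E F) x := by
    rw [← sum_add_distrib]
    exact sum_congr rfl fun x _ => deg_eq_deg_add_deg_sdiff (filter_subset _ _) x
  rw [← hsum, sum_eq_sum_leaves_add_sum_stems_add_sum_Xset (E := E), hF.sum_deg_leaves, hX]
  ring

theorem card_leaves_le (hF : ShadowsMinimal t F) :
    #(univ.filter t.IsLeaf) ≤ #F + #(MFlinks t E F) + #(F ∩ Wlinks t E) := by
  have hle : #(univ.filter t.IsLeaf) ≤ #F + #(leafLinks t F) := by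
    have := sum_deg_le_card_add_card_filter (fun e he => hF.not_isDiag he) (univ.filter t.IsLeaf)
    rw [hF.sum_deg_leaves] at this
    convert this using 3
    ext e
    simp [leafLinks]
  have hsplit : #(MFlinks t E F) + #(leafLinks t F ∩ Wlinks t E) = #(leafLinks t F) :=
    card_sdiff_add_card_inter _ _
  have hW : #(leafLinks t F ∩ Wlinks t E) ≤ #(F ∩ Wlinks t E) :=
    card_le_card (inter_subset_inter_right (filter_subset _ _))
  omega

theorem card_MFlinks_add_card_Nlinks_le {M : Finset (Sym2 V)} (hFE : F ⊆ E)
    (hF : ShadowsMinimal t F) (hM : IsMaxLeafMatching t E M) :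
    #(MFlinks t E F) + #(Nlinks t E F M) ≤ #M := by
  obtain ⟨hMsub, hMmatch, hMmax⟩ := hM
  have hMF : IsMatching (MFlinks t E F) := by
    refine ⟨fun e he => hF.not_isDiag (filter_subset _ _ (sdiff_subset he)), ?_⟩
    intro e he f hf hne x hxe hxf
    obtain ⟨heF, hleaf⟩ := mem_filter.1 (mem_sdiff.1 he).1
    exact hne (hF.eq_of_isLeaf (hleaf x hxe) heF (filter_subset _ _ (sdiff_subset hf)) hxe hxf)
  have hcross : ∀ e ∈ MFlinks t E F, ∀ f ∈ Nlinks t E F M, ∀ x ∈ e, x ∉ f :=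
    fun e he f hf x hxe hxf => (mem_filter.1 hf).2 x hxf e he hxe
  have hdisj : Disjoint (MFlinks t E F) (Nlinks t E F M) := disjoint_left.2 fun e he he' =>
    hcross e he e he' _ (Sym2.out_fst_mem e) (Sym2.out_fst_mem e)
  rw [← card_union_of_disjoint hdisj]
  exact hMmax _ (union_subset (sdiff_subset_sdiff (filter_subset_filter _ hFE) subset_rfl)
    ((filter_subset _ _).trans hMsub)) (hMF.union (hMmatch.mono (filter_subset _ _)) hcross)

theorem card_leaves_eq {M : Finset (Sym2 V)} (hM : IsMaxLeafMatching t E M) :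
    #(univ.filter t.IsLeaf) = 2 * #M + #(unmatchedLeaves t M) := by
  rw [hM.2.1.card_eq fun e he => by simpa using (mem_filter.1 (mem_sdiff.1 (hM.1 he)).1).2,
    unmatchedLeaves, filter_filter]
  congr

theorem lower_bound_general (t : Tree V) (E F M : Finset (Sym2 V))
    (hsh : ShadowClosed t E) (hF : IsGoodCover t E F)
    (hM : IsMaxLeafMatching t E M) :
    (3 / 2 : ℚ) * (F.card : ℚ) ≥ LB t E F M := by
  obtain ⟨hFE, hSM, -, -⟩ := hF
  have hdeg := two_mul_card_eq (E := E) hSM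
  have hleaves := card_leaves_le (E := E) hSM
  have hcharge := card_inter_Wlinks_le hsh hFE hSM
  have hmatch := card_MFlinks_add_card_Nlinks_le hFE hSM hM
  have hcount := card_leaves_eq hM
  have key : 3 * #M + 2 * #(unmatchedLeaves t M) + #(Nlinks t E F M)
      + ∑ x ∈ Xset t E, deg (Jlinks t E F) x ≤ 3 * #F := by
    omega
  have hq := (Nat.cast_le (α := ℚ)).2 key
  push_cast at hq
  rw [ge_iff_le, LB]
  linarith

/-- the lower bound
`(3/2)|F| ≥ (3/2)|M| + |U| + (1/2)|N| + (1/2) Σ_{x ∈ X} d_J(x)`. -/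
theorem lower_bound (t : Tree V) (E F M : Finset (Sym2 V))
    (hnd : ∀ e ∈ E, ¬ e.IsDiag) (hsh : ShadowClosed t E) (hF : IsGoodCover t E F)
    (hM : IsMaxLeafMatching t E M) :
    (3 / 2 : ℚ) * (F.card : ℚ) ≥ LB t E F M :=
  lower_bound_general t E F M hsh hF hM

end Counting

end TAP
end
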